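/- arXiv:2505.13810 — 4 statements merged into one kernel-verified Lean document; each statement's English description precedes it below -/
import Mathlib

section
/- Let ρ be a density operator on a finite-dimensional Hilbert space and A a Hermitian operator. Then for every s ≤ 0, I^s(ρ,A) ≤ V(ρ,A), where V(ρ,A) = tr(ρA²) − (tr(ρA))² is the variance. Moreover, if ρ is a pure state, then I^s(ρ,A) = V(ρ,A). -/
open Matrix

/-- Power mean of order s ≤ 0 of two nonnegative reals, set to 0 when either argument vanishes
(and equal to the geometric mean when s = 0). -/
noncomputable def powerMean (s a b : ℝ) : ℝ :=
  if a = 0 ∨ b = 0 then 0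
  else if s = 0 then Real.sqrt (a * b)
  else ((a ^ s + b ^ s) / 2) ^ (1 / s)

lemma powerMean_nonneg {s a b : ℝ} (ha : 0 ≤ a) (hb : 0 ≤ b) : 0 ≤ powerMean s a b := by
  unfold powerMean
  split_ifs with h1 h2
  · exact le_rfl
  · exact Real.sqrt_nonneg _
  · push_neg at h1
    have hpa : 0 < a ^ s := Real.rpow_pos_of_pos (lt_of_le_of_ne ha (Ne.symm h1.1)) s
    have hpb : 0 < b ^ s := Real.rpow_pos_of_pos (lt_of_le_of_ne hb (Ne.symm h1.2)) s
    exact Real.rpow_nonneg (by positivity) _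

lemma powerMean_self {s a : ℝ} (ha : 0 ≤ a) : powerMean s a a = a := by
  unfold powerMean
  split_ifs with h1 h2
  · rcases h1 with h | h <;> exact h.symm
  · exact Real.sqrt_mul_self ha
  · push_neg at h1
    have h3 : (a ^ s + a ^ s) / 2 = a ^ s := by ring
    rw [h3, ← Real.rpow_mul ha, mul_one_div_cancel h2, Real.rpow_one]

lemma powerMean_left_zero {s b : ℝ} : powerMean s 0 b = 0 := by
  unfold powerMean; simp

lemma powerMean_right_zero {s a : ℝ} : powerMean s a 0 = 0 := by
  unfold powerMean; simp

/-- For a density matrix ρ = Σ_l λ_l |ψ_l⟩⟨ψ_l| and Hermitian A, for every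
s ≤ 0 the generalized Wigner–Yanase skew information I^s(ρ,A) is at most the variance
V(ρ,A) = tr(ρA²) − (tr(ρA))²; moreover, if ρ is pure (one eigenvalue 1, the rest 0),
then I^s(ρ,A) = V(ρ,A). -/
theorem stmt_8 {d : ℕ} (s : ℝ) (hs : s ≤ 0)
    (lam : Fin d → ℝ) (hlam : ∀ l, 0 ≤ lam l) (hlamsum : ∑ l, lam l = 1)
    (ψ : Fin d → (Fin d → ℂ))
    (horth : ∀ l l', star (ψ l) ⬝ᵥ ψ l' = if l = l' then 1 else 0)
    (ρ A : Matrix (Fin d) (Fin d) ℂ)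
    (hρ : ρ = ∑ l, (lam l : ℂ) • vecMulVec (ψ l) (star (ψ l)))
    (hA : A.IsHermitian) :
    (((ρ * A * A).trace).re
        - ∑ l, ∑ l', powerMean s (lam l) (lam l') * ‖star (ψ l) ⬝ᵥ (A *ᵥ ψ l')‖ ^ 2
      ≤ ((ρ * A * A).trace).re - (((ρ * A).trace).re) ^ 2) ∧
    ((∃ l₀ : Fin d, lam l₀ = 1 ∧ ∀ l, l ≠ l₀ → lam l = 0) →
      ((ρ * A * A).trace).re
          - ∑ l, ∑ l', powerMean s (lam l) (lam l') * ‖star (ψ l) ⬝ᵥ (A *ᵥ ψ l')‖ ^ 2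
        = ((ρ * A * A).trace).re - (((ρ * A).trace).re) ^ 2) := by
  -- diagonal matrix elements are real
  have hstar : ∀ l, star (star (ψ l) ⬝ᵥ (A *ᵥ ψ l)) = star (ψ l) ⬝ᵥ (A *ᵥ ψ l) := by
    intro l
    have key : star (ψ l) ⬝ᵥ (A *ᵥ ψ l) = star (star (A *ᵥ ψ l) ⬝ᵥ ψ l) :=
      star_dotProduct _ _
    conv_lhs => rw [key, star_star, star_mulVec, hA.eq]
    exact (dotProduct_mulVec _ _ _).symm
  have him : ∀ l, (star (ψ l) ⬝ᵥ (A *ᵥ ψ l)).im = 0 :=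
    fun l => Complex.conj_eq_iff_im.mp (hstar l)
  have hnorm : ∀ l, ‖star (ψ l) ⬝ᵥ (A *ᵥ ψ l)‖ ^ 2
      = (star (ψ l) ⬝ᵥ (A *ᵥ ψ l)).re ^ 2 := by
    intro l
    have h : star (ψ l) ⬝ᵥ (A *ᵥ ψ l) = (((star (ψ l) ⬝ᵥ (A *ᵥ ψ l)).re : ℝ) : ℂ) :=
      Complex.ext rfl (him l)
    rw [h, Complex.norm_real, Real.norm_eq_abs, sq_abs]
    simp
  -- trace of ρ * A
  have htr : ((ρ * A).trace).re = ∑ l, lam l * (star (ψ l) ⬝ᵥ (A *ᵥ ψ l)).re := by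
    have h1 : (ρ * A).trace = ∑ l, (lam l : ℂ) * (star (ψ l) ⬝ᵥ (A *ᵥ ψ l)) := by
      rw [hρ, Finset.sum_mul, trace_sum]
      apply Finset.sum_congr rfl
      intro l _
      rw [smul_mul_assoc, trace_smul, smul_eq_mul]
      congr 1
      simp only [Matrix.trace, Matrix.diag, Matrix.mul_apply, vecMulVec_apply,
        dotProduct, mulVec]
      rw [Finset.sum_comm]
      apply Finset.sum_congr rfl
      intro i _
      rw [Finset.mul_sum]
      apply Finset.sum_congr rfl
      intro j _
      simp [dotProduct]
      ring
    rw [h1, Complex.re_sum]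
    apply Finset.sum_congr rfl
    intro l _
    simp
  constructor
  · -- inequality
    apply sub_le_sub_left
    rw [htr]
    have key : (∑ l, lam l * (star (ψ l) ⬝ᵥ (A *ᵥ ψ l)).re) ^ 2
        ≤ ∑ l, lam l * (star (ψ l) ⬝ᵥ (A *ᵥ ψ l)).re ^ 2 := by
      calc (∑ l, lam l * (star (ψ l) ⬝ᵥ (A *ᵥ ψ l)).re) ^ 2
          = (∑ l, Real.sqrt (lam l) * (Real.sqrt (lam l) * (star (ψ l) ⬝ᵥ (A *ᵥ ψ l)).re)) ^ 2 := by
            congr 1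
            apply Finset.sum_congr rfl
            intro l _
            rw [← mul_assoc, Real.mul_self_sqrt (hlam l)]
        _ ≤ (∑ l, Real.sqrt (lam l) ^ 2)
            * ∑ l, (Real.sqrt (lam l) * (star (ψ l) ⬝ᵥ (A *ᵥ ψ l)).re) ^ 2 :=
            Finset.sum_mul_sq_le_sq_mul_sq _ _ _
        _ = ∑ l, lam l * (star (ψ l) ⬝ᵥ (A *ᵥ ψ l)).re ^ 2 := by
            have h2 : (∑ l, Real.sqrt (lam l) ^ 2) = 1 := by
              rw [← hlamsum]
              exact Finset.sum_congr rfl fun l _ => Real.sq_sqrt (hlam l)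
            rw [h2, one_mul]
            apply Finset.sum_congr rfl
            intro l _
            rw [mul_pow, Real.sq_sqrt (hlam l)]
    refine key.trans (Finset.sum_le_sum fun l _ => ?_)
    have hdiag : lam l * (star (ψ l) ⬝ᵥ (A *ᵥ ψ l)).re ^ 2
        = powerMean s (lam l) (lam l) * ‖star (ψ l) ⬝ᵥ (A *ᵥ ψ l)‖ ^ 2 := by
      rw [powerMean_self (hlam l), hnorm l]
    rw [hdiag]
    exact Finset.single_le_sum
      (f := fun l' => powerMean s (lam l) (lam l') * ‖star (ψ l) ⬝ᵥ (A *ᵥ ψ l')‖ ^ 2)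
      (fun l' _ => mul_nonneg (powerMean_nonneg (hlam l) (hlam l')) (sq_nonneg _))
      (Finset.mem_univ l)
  · -- pure case
    rintro ⟨l₀, h1, h0⟩
    congr 1
    have hsum : (∑ l, ∑ l', powerMean s (lam l) (lam l')
          * ‖star (ψ l) ⬝ᵥ (A *ᵥ ψ l')‖ ^ 2)
        = (star (ψ l₀) ⬝ᵥ (A *ᵥ ψ l₀)).re ^ 2 := by
      rw [Finset.sum_eq_single l₀]
      · rw [Finset.sum_eq_single l₀]
        · rw [h1, powerMean_self (by norm_num : (0:ℝ) ≤ 1), one_mul, hnorm]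
        · intro l' _ hl'
          rw [h0 l' hl', powerMean_right_zero, zero_mul]
        · intro h; exact absurd (Finset.mem_univ l₀) h
      · intro l _ hl
        apply Finset.sum_eq_zero
        intro l' _
        rw [h0 l hl, powerMean_left_zero, zero_mul]
      · intro h; exact absurd (Finset.mem_univ l₀) h
    rw [hsum, htr, Finset.sum_eq_single l₀]
    · rw [h1, one_mul]
    · intro l _ hl; rw [h0 l hl, zero_mul]
    · intro h; exact absurd (Finset.mem_univ l₀) h
end

section
/- Let {P_n^{(b)} = 𝕀/d + t F_n^{(b)}} be the Kalev–Gour construction of a complete set of d+1 MUMs on ℂ^d, built from an orthonormal family {F_{n,b}} of Hermitian traceless operators as above, with κ = 1/d + t²(1+√d)²(d−1). Then Σ_{b=1}^{d+1} Σ_{n=1}^{d} (P_n^{(b)})² = (d+1)κ 𝕀. -/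
open Matrix

/-- The Kalev–Gour operators F_n^{(b)}. -/
noncomputable def KGop {d : ℕ} (F : Fin (d - 1) → Fin (d + 1) → Matrix (Fin d) (Fin d) ℂ)
    (b : Fin (d + 1)) (n : Fin d) : Matrix (Fin d) (Fin d) ℂ :=
  if h : (n : ℕ) < d - 1
  then (∑ m, F m b) - (((d : ℝ) + Real.sqrt d : ℝ) : ℂ) • F ⟨(n : ℕ), h⟩ b
  else (((1 : ℝ) + Real.sqrt d : ℝ) : ℂ) • (∑ m, F m b)

/-- The Kalev–Gour MUM operators P_n^{(b)} = 𝕀/d + t F_n^{(b)}. -/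
noncomputable def KGP {d : ℕ} (F : Fin (d - 1) → Fin (d + 1) → Matrix (Fin d) (Fin d) ℂ)
    (t : ℝ) (b : Fin (d + 1)) (n : Fin d) : Matrix (Fin d) (Fin d) ℂ :=
  (1 / (d : ℂ)) • (1 : Matrix (Fin d) (Fin d) ℂ) + (t : ℂ) • KGop F b n

theorem complete {d : ℕ} (hd : 2 ≤ d)
    (F : Fin (d - 1) → Fin (d + 1) → Matrix (Fin d) (Fin d) ℂ)
    (hHerm : ∀ n b, (F n b).IsHermitian)
    (htraceless : ∀ n b, (F n b).trace = 0)
    (horth : ∀ n b n' b', ((F n b) * (F n' b')).trace = if n = n' ∧ b = b' then 1 else 0) :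
    ∑ b : Fin (d + 1), ∑ m : Fin (d - 1), F m b * F m b
      = (((d : ℝ) - 1/d : ℝ) : ℂ) • (1 : Matrix (Fin d) (Fin d) ℂ) := by
  classical
  set v : Option (Fin (d-1) × Fin (d+1)) → EuclideanSpace ℂ (Fin d × Fin d) :=
    fun o => match o with
    | none => WithLp.toLp 2 (fun p : Fin d × Fin d => ((Real.sqrt d)⁻¹ : ℂ) * (1 : Matrix (Fin d) (Fin d) ℂ) p.1 p.2)
    | some (m, b) => WithLp.toLp 2 (fun p : Fin d × Fin d => F m b p.1 p.2) with hv
  have hd0 : (0:ℝ) < d := by positivity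
  have hsq : Real.sqrt d ≠ 0 := by positivity
  have hherm' : ∀ n b i j, starRingEnd ℂ (F n b i j) = F n b j i := by
    intro n b i j
    have := (hHerm n b).apply j i
    exact this
  have key : ∀ (m m' : Fin (d-1)) (b b' : Fin (d+1)),
      ∑ p : Fin d × Fin d, starRingEnd ℂ (F m b p.1 p.2) * F m' b' p.1 p.2
        = (F m b * F m' b').trace := by
    intro m m' b b'
    rw [Fintype.sum_prod_type, Matrix.trace]
    simp only [Matrix.diag, Matrix.mul_apply, hherm']
    rw [Finset.sum_comm]
  have hon : Orthonormal ℂ v := by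
    rw [orthonormal_iff_ite]
    intro o o'
    rw [PiLp.inner_apply]
    simp only [RCLike.inner_apply']
    match o, o' with
    | none, none =>
      simp only [hv, PiLp.toLp_apply, if_pos rfl]
      have hs : ∀ x y : Fin d, (starRingEnd ℂ) (((Real.sqrt d)⁻¹ : ℂ) * (1 : Matrix (Fin d) (Fin d) ℂ) x y) * (((Real.sqrt d)⁻¹ : ℂ) * (1 : Matrix (Fin d) (Fin d) ℂ) x y) = if x = y then (((d:ℝ)⁻¹ : ℝ) : ℂ) else 0 := by
        intro x y
        rw [Matrix.one_apply]
        split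
        · simp only [mul_one, ← Complex.ofReal_inv, Complex.conj_ofReal, ← Complex.ofReal_mul]
          rw [← Real.sqrt_inv, Real.mul_self_sqrt (by positivity : (0:ℝ) ≤ ((d:ℝ))⁻¹)]
        · simp
      rw [Fintype.sum_prod_type]
      simp only [hs, Finset.sum_ite_eq, Finset.mem_univ, if_true]
      rw [Finset.sum_const, Finset.card_univ, Fintype.card_fin, nsmul_eq_mul]
      have : ((d:ℝ) : ℂ) ≠ 0 := by
        simp only [ne_eq, Complex.ofReal_eq_zero]
        positivity
      field_simp
      rw [Complex.ofReal_div, Complex.ofReal_one, Complex.ofReal_natCast]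
      exact mul_one_div_cancel (Nat.cast_ne_zero.mpr (by omega))
    | none, some (m, b) =>
      simp only [hv, PiLp.toLp_apply]
      have : ∑ p : Fin d × Fin d, starRingEnd ℂ (((Real.sqrt d)⁻¹ : ℂ) * (1 : Matrix (Fin d) (Fin d) ℂ) p.1 p.2) * F m b p.1 p.2 = (starRingEnd ℂ ((Real.sqrt d)⁻¹ : ℂ)) * (F m b).trace := by
        rw [Fintype.sum_prod_type, Matrix.trace, Finset.mul_sum]
        have hs : ∀ x y : Fin d, (starRingEnd ℂ) ((((Real.sqrt d)⁻¹ : ℂ)) * (1 : Matrix (Fin d) (Fin d) ℂ) x y) = if x = y then ((Real.sqrt d)⁻¹ : ℂ) else 0 := by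
          intro x y
          rw [Matrix.one_apply]
          split <;> simp [← Complex.ofReal_inv, Complex.conj_ofReal]
        simp only [hs, ite_mul, zero_mul, Finset.sum_ite_eq, Finset.mem_univ, if_true]
        simp [Matrix.diag, ← Complex.ofReal_inv]
      rw [this, htraceless, mul_zero]
      simp
    | some (m, b), none =>
      simp only [hv, PiLp.toLp_apply]
      have : ∑ p : Fin d × Fin d, starRingEnd ℂ (F m b p.1 p.2) * (((Real.sqrt d)⁻¹ : ℂ) * (1 : Matrix (Fin d) (Fin d) ℂ) p.1 p.2) = ((Real.sqrt d)⁻¹ : ℂ) * (F m b).trace := by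
        rw [Fintype.sum_prod_type, Matrix.trace, Finset.mul_sum]
        simp only [Matrix.one_apply, mul_ite, mul_one, mul_zero]
        simp [Finset.sum_ite_eq, Matrix.diag, hherm', mul_comm]
      rw [this, htraceless, mul_zero]
      simp
    | some (m, b), some (m', b') =>
      simp only [hv, PiLp.toLp_apply]
      rw [key, horth]
      simp [Prod.ext_iff, eq_comm]
  have hcard : Fintype.card (Option (Fin (d-1) × Fin (d+1)))
      = Module.finrank ℂ (EuclideanSpace ℂ (Fin d × Fin d)) := by
    obtain ⟨k, rfl⟩ : ∃ k, d = k + 1 := ⟨d - 1, by omega⟩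
    simp [finrank_euclideanSpace]
    ring
  have hspan : ⊤ ≤ Submodule.span ℂ (Set.range v) :=
    (hon.linearIndependent.span_eq_top_of_card_eq_finrank hcard).ge
  let B : OrthonormalBasis (Option (Fin (d-1) × Fin (d+1))) ℂ (EuclideanSpace ℂ (Fin d × Fin d)) :=
    OrthonormalBasis.mk hon hspan
  have hB : ∀ o, B o = v o := fun o => by simp [B, OrthonormalBasis.coe_mk]
  ext l i
  have main : ∀ j : Fin d,
      (∑ o : Option (Fin (d-1) × Fin (d+1)), (v o (l,j)) * starRingEnd ℂ (v o (i,j)))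
        = if l = i then 1 else 0 := by
    intro j
    have h1 := B.sum_inner_mul_inner (EuclideanSpace.single ((l,j)) (1:ℂ))
      (EuclideanSpace.single ((i,j)) (1:ℂ))
    simp only [hB] at h1
    simp only [PiLp.inner_apply, RCLike.inner_apply, EuclideanSpace.single_apply] at h1
    simp only [apply_ite (starRingEnd ℂ), _root_.map_one, map_zero, ite_mul, one_mul, zero_mul,
      mul_ite, mul_one, mul_zero, Finset.sum_ite_eq, Finset.sum_ite_eq', Finset.mem_univ,
      if_true] at h1
    rw [h1]
    simp [Prod.ext_iff, eq_comm]
  have main2 : ∑ j : Fin d,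
      (∑ o : Option (Fin (d-1) × Fin (d+1)), (v o (l,j)) * starRingEnd ℂ (v o (i,j)))
        = if l = i then (d : ℂ) else 0 := by
    simp [main]
  rw [Finset.sum_comm] at main2
  rw [Fintype.sum_option] at main2
  have hone : ∀ x y : Fin d, (((Real.sqrt d)⁻¹ : ℂ) * (1 : Matrix (Fin d) (Fin d) ℂ) x y)
      = if x = y then ((Real.sqrt d)⁻¹:ℂ) else 0 := by
    intro x y
    rw [Matrix.one_apply]
    split <;> simp
  have t1 : ∑ j : Fin d, (v none (l,j)) * starRingEnd ℂ (v none (i,j))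
      = if l = i then ((d:ℂ))⁻¹ else 0 := by
    simp only [hv, hone]
    simp only [apply_ite (starRingEnd ℂ), map_zero, map_inv₀, Complex.conj_ofReal, ite_mul,
      zero_mul, mul_ite, mul_zero, Finset.sum_ite_eq, Finset.mem_univ, if_true]
    have hcc : (((Real.sqrt d : ℝ):ℂ))⁻¹ * (((Real.sqrt d : ℝ):ℂ))⁻¹ = ((d:ℂ))⁻¹ := by
      rw [← Complex.ofReal_inv, ← Complex.ofReal_mul, ← Real.sqrt_inv,
        Real.mul_self_sqrt (by positivity : (0:ℝ) ≤ ((d:ℝ))⁻¹)]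
      push_cast
      ring
    rw [hcc]
  have t2 : ∀ (m : Fin (d-1)) (b : Fin (d+1)),
      ∑ j : Fin d, (v (some (m,b)) (l,j)) * starRingEnd ℂ (v (some (m,b)) (i,j))
        = (F m b * F m b) l i := by
    intro m b
    simp only [hv]
    rw [Matrix.mul_apply]
    simp [hherm']
  rw [t1] at main2
  simp only [t2] at main2
  simp only [Matrix.sum_apply]
  have swap : ∑ p : Fin (d-1) × Fin (d+1), (F p.1 p.2 * F p.1 p.2) l i
      = ∑ b : Fin (d+1), ∑ m : Fin (d-1), (F m b * F m b) l i := by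
    rw [Fintype.sum_prod_type]
    exact Finset.sum_comm
  rw [← swap]
  have hsum : ∑ p : Fin (d-1) × Fin (d+1), (F p.1 p.2 * F p.1 p.2) l i
      = (if l = i then (d:ℂ) else 0) - (if l = i then ((d:ℂ))⁻¹ else 0) := by
    rw [← main2]
    ring_nf
  rw [hsum]
  rw [Matrix.smul_apply, Matrix.one_apply]
  have hdc : ((d:ℝ) : ℂ) ≠ 0 := by
    simp only [ne_eq, Complex.ofReal_eq_zero]
    positivity
  split_ifs <;> simp_all

/-- For the Kalev–Gour construction of a complete set of d+1 MUMs with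
κ = 1/d + t²(1+√d)²(d−1), one has Σ_{b=1}^{d+1} Σ_{n=1}^{d} (P_n^{(b)})² = (d+1)κ 𝕀. -/
theorem stmt_12 {d : ℕ} (hd : 2 ≤ d)
    (F : Fin (d - 1) → Fin (d + 1) → Matrix (Fin d) (Fin d) ℂ)
    (hHerm : ∀ n b, (F n b).IsHermitian)
    (htraceless : ∀ n b, (F n b).trace = 0)
    (horth : ∀ n b n' b', ((F n b) * (F n' b')).trace = if n = n' ∧ b = b' then 1 else 0)
    (t κ : ℝ)
    (hκ : κ = 1 / d + t ^ 2 * (1 + Real.sqrt d) ^ 2 * (d - 1)) :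
    ∑ b : Fin (d + 1), ∑ n : Fin d, (KGP F t b n) * (KGP F t b n)
      = ((((d : ℝ) + 1) * κ : ℝ) : ℂ) • (1 : Matrix (Fin d) (Fin d) ℂ) := by
  classical
  have hcomp := complete hd F hHerm htraceless horth
  obtain ⟨k, rfl⟩ : ∃ k, d = k + 1 := ⟨d - 1, by omega⟩
  set F' : Fin k → Fin (k + 1 + 1) → Matrix (Fin (k+1)) (Fin (k+1)) ℂ := F with hF'
  set s : ℝ := Real.sqrt ((k+1 : ℕ) : ℝ) with hs
  set D : ℝ := ((k+1 : ℕ) : ℝ) with hD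
  have hd0 : (0:ℝ) < D := by positivity
  have hs2 : s * s = D := Real.mul_self_sqrt hd0.le
  -- rfl conversions between Fin (k+1-1) and Fin k sums
  have hsumF : ∀ b, (∑ m : Fin (k+1-1), F m b) = ∑ m : Fin k, F' m b := fun b => rfl
  have hsumFF : ∀ b, (∑ m : Fin (k+1-1), F m b * F m b) = ∑ m : Fin k, F' m b * F' m b :=
    fun b => rfl
  have hop : ∀ (b : Fin (k+1+1)) (n : Fin k),
      KGop F b n.castSucc = (∑ m : Fin k, F' m b) - ((D + s : ℝ) : ℂ) • F' n b := by
    intro b n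
    rw [KGop, dif_pos (show ((n.castSucc : ℕ)) < k+1-1 by simpa using n.isLt)]
    rfl
  have hlast : ∀ b : Fin (k+1+1),
      KGop F b (Fin.last k) = ((1 + s : ℝ) : ℂ) • ∑ m : Fin k, F' m b := by
    intro b
    rw [KGop, dif_neg (by simp)]
    rfl
  have hsum_op : ∀ b : Fin (k+1+1), ∑ n : Fin (k+1), KGop F b n = 0 := by
    intro b
    rw [Fin.sum_univ_castSucc]
    simp only [hop, hlast]
    rw [Finset.sum_sub_distrib, Finset.sum_const, Finset.card_univ, Fintype.card_fin,
      ← Finset.smul_sum]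
    rw [← Nat.cast_smul_eq_nsmul ℂ k, ← sub_smul, ← add_smul]
    have hz : ((k:ℂ)) - ((D + s : ℝ):ℂ) + ((1 + s : ℝ):ℂ) = 0 := by
      simp only [hD]
      push_cast
      ring
    rw [hz, zero_smul]
  have hsum_sq : ∀ b : Fin (k+1+1),
      ∑ n : Fin (k+1), KGop F b n * KGop F b n
        = (((D + s)^2 : ℝ) : ℂ) • ∑ m : Fin k, F' m b * F' m b := by
    intro b
    rw [Fin.sum_univ_castSucc]
    simp only [hop, hlast]
    set T := ∑ m : Fin k, F' m b with hT
    set c : ℂ := ((D + s : ℝ) : ℂ) with hc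
    have hexp : ∀ n : Fin k, (T - c • F' n b) * (T - c • F' n b)
        = T*T - c • (T * F' n b) - c • (F' n b * T) + (c*c) • (F' n b * F' n b) := by
      intro n
      simp only [sub_mul, mul_sub, smul_mul_assoc, mul_smul_comm, smul_smul, smul_sub]
      abel
    simp only [hexp]
    rw [Finset.sum_add_distrib, Finset.sum_sub_distrib, Finset.sum_sub_distrib,
      Finset.sum_const, Finset.card_univ, Fintype.card_fin,
      ← Finset.smul_sum, ← Finset.smul_sum, ← Finset.smul_sum,
      ← Finset.mul_sum, ← Finset.sum_mul, ← hT]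
    rw [smul_mul_assoc, mul_smul_comm, smul_smul]
    rw [← Nat.cast_smul_eq_nsmul ℂ k (T*T)]
    have hs2C : (s : ℂ) * (s : ℂ) = (k : ℂ) + 1 := by
      have := congrArg (fun x : ℝ => (x : ℂ)) hs2
      push_cast at this
      simpa [hD] using this
    match_scalars
    · simp only [hc, hD]
      push_cast
      linear_combination hs2C
    · simp only [hc, hD]
      push_cast
      ring
  have hexpand : ∀ (b : Fin (k+1+1)) (n : Fin (k+1)), KGP F t b n * KGP F t b n
      = ((1/((k+1:ℕ):ℂ)) * (1/((k+1:ℕ):ℂ))) • 1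
        + ((1/((k+1:ℕ):ℂ)) * t + (t:ℂ) * (1/((k+1:ℕ):ℂ))) • KGop F b n
        + ((t:ℂ)*(t:ℂ)) • (KGop F b n * KGop F b n) := by
    intro b n
    rw [KGP]
    simp only [add_mul, mul_add, smul_mul_assoc, mul_smul_comm, smul_smul, mul_one, one_mul]
    module
  have hinner : ∀ b : Fin (k+1+1), ∑ n : Fin (k+1), KGP F t b n * KGP F t b n
      = ((((k+1:ℕ):ℂ)) * ((1/((k+1:ℕ):ℂ)) * (1/((k+1:ℕ):ℂ)))) • 1
        + (((t:ℂ)*(t:ℂ)) * (((D + s)^2 : ℝ):ℂ)) • ∑ m : Fin k, F' m b * F' m b := by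
    intro b
    simp only [hexpand]
    rw [Finset.sum_add_distrib, Finset.sum_add_distrib, ← Finset.smul_sum, ← Finset.smul_sum,
      Finset.sum_const, Finset.card_univ, Fintype.card_fin, hsum_op, smul_zero, add_zero,
      ← Finset.smul_sum, hsum_sq, ← Nat.cast_smul_eq_nsmul ℂ, smul_smul, smul_smul]
    module
  have hcomp' : ∑ b : Fin (k+1+1), ∑ m : Fin k, F' m b * F' m b
      = ((D - 1 / D : ℝ) : ℂ) • 1 := hcomp
  rw [Finset.sum_congr rfl (fun b _ => hinner b)]
  rw [Finset.sum_add_distrib, Finset.sum_const, Finset.card_univ, Fintype.card_fin,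
    ← Finset.smul_sum, hcomp', smul_smul, ← Nat.cast_smul_eq_nsmul ℂ, smul_smul, ← add_smul]
  congr 1
  have hs2C : (s : ℂ) * (s : ℂ) = (k : ℂ) + 1 := by
    have := congrArg (fun x : ℝ => (x : ℂ)) hs2
    push_cast at this
    simpa [hD] using this
  have hDne : ((k:ℂ) + 1) ≠ 0 := by
    have : ((k+1:ℕ):ℂ) ≠ 0 := Nat.cast_ne_zero.mpr (by omega)
    push_cast at this
    exact this
  have e2 : (s:ℂ)^2 = (k:ℂ) + 1 := by rw [sq]; exact hs2C
  have e3 : (s:ℂ)^3 = ((k:ℂ) + 1) * s := by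
    rw [pow_succ, e2]
  have e4 : (s:ℂ)^4 = ((k:ℂ) + 1)^2 := by
    rw [show 4 = 2*2 from rfl, pow_mul, e2]
  simp only [hκ, hD]
  push_cast
  field_simp
  ring_nf
  simp only [e2, e3, e4]
  ring_nf
end

section
/- Let {P_n^{(b)}} (n = 1,...,d; b = 1,...,d+1) be a complete set of MUMs on ℂ^d of Kalev–Gour form P_n^{(b)} = 𝕀/d + t F_n^{(b)} with κ = 1/d + t²(1+√d)²(d−1). Then for the induced operators on ℂ^d ⊗ ℂ^d, Σ_{b=1}^{d+1} Σ_{n=1}^{d} P_n^{(b)} ⊗ P_n^{(b)} ≤ (1 + κ)(𝕀 ⊗ 𝕀). -/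
open Matrix Kronecker ComplexOrder

section Helpers
variable {l m n p : Type*}

lemma sub_kron (A B : Matrix l m ℂ) (C : Matrix n p ℂ) :
    (A - B) ⊗ₖ C = A ⊗ₖ C - B ⊗ₖ C := by
  ext ⟨i, j⟩ ⟨k, r⟩; simp [Matrix.kroneckerMap_apply, sub_mul]

lemma kron_sub (A : Matrix l m ℂ) (B C : Matrix n p ℂ) :
    A ⊗ₖ (B - C) = A ⊗ₖ B - A ⊗ₖ C := by
  ext ⟨i, j⟩ ⟨k, r⟩; simp [Matrix.kroneckerMap_apply, mul_sub]

lemma sum_kron {ι : Type*} (s : Finset ι) (A : ι → Matrix l m ℂ) (C : Matrix n p ℂ) :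
    (∑ i ∈ s, A i) ⊗ₖ C = ∑ i ∈ s, A i ⊗ₖ C := by
  ext ⟨i, j⟩ ⟨k, r⟩; simp [Matrix.kroneckerMap_apply, Finset.sum_mul, Matrix.sum_apply]

lemma kron_sum {ι : Type*} (s : Finset ι) (A : Matrix l m ℂ) (C : ι → Matrix n p ℂ) :
    A ⊗ₖ (∑ i ∈ s, C i) = ∑ i ∈ s, A ⊗ₖ C i := by
  ext ⟨i, j⟩ ⟨k, r⟩; simp [Matrix.kroneckerMap_apply, Finset.mul_sum, Matrix.sum_apply]

end Helpers

/-- The swap (flip) operator on `ℂ^d ⊗ ℂ^d`. -/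
def swapMat (d : ℕ) : Matrix (Fin d × Fin d) (Fin d × Fin d) ℂ :=
  Matrix.of fun p q => if p.1 = q.2 ∧ p.2 = q.1 then 1 else 0

lemma swapMat_conjTranspose (d : ℕ) : (swapMat d)ᴴ = swapMat d := by
  ext ⟨a, c⟩ ⟨b, e⟩
  simp only [swapMat, conjTranspose_apply, Matrix.of_apply]
  by_cases h : a = e ∧ c = b
  · rw [if_pos h, if_pos ⟨h.2.symm, h.1.symm⟩]; simp
  · rw [if_neg h, if_neg (fun hh => h ⟨hh.2.symm, hh.1.symm⟩)]; simp

lemma swapMat_mul_self (d : ℕ) : swapMat d * swapMat d = 1 := by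
  ext ⟨a, c⟩ ⟨b, e⟩
  rw [Matrix.mul_apply, Fintype.sum_prod_type]
  simp [swapMat, Matrix.one_apply, ite_and, Prod.ext_iff, Finset.sum_ite_eq, and_comm]

lemma trace_stdBasisMatrix_mul {d : ℕ} (p q : Fin d) (M : Matrix (Fin d) (Fin d) ℂ) :
    (Matrix.single p q (1 : ℂ) * M).trace = M q p := by
  simp [Matrix.trace, Matrix.diag, Matrix.mul_apply, Matrix.single, ite_and,
    Finset.sum_ite_eq, Finset.sum_ite_eq']

lemma matrix_expansion {ι : Type*} [Fintype ι] [DecidableEq ι] [Nonempty ι] {N : ℕ}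
    (C : ι → Matrix (Fin N) (Fin N) ℂ)
    (horth : ∀ i j, (C i * C j).trace = if i = j then 1 else 0)
    (hcard : Fintype.card ι = N * N) (X : Matrix (Fin N) (Fin N) ℂ) :
    X = ∑ j, (X * C j).trace • C j := by
  have key : ∀ (g : ι → ℂ) (j : ι), ((∑ i, g i • C i) * C j).trace = g j := by
    intro g j
    rw [Finset.sum_mul, Matrix.trace_sum]
    simp only [Matrix.smul_mul, Matrix.trace_smul, horth, smul_eq_mul, mul_ite, mul_one, mul_zero]
    simp
  have hli : LinearIndependent ℂ C := by
    rw [Fintype.linearIndependent_iff]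
    intro g hg i
    have := key g i
    rw [hg] at this
    simpa using this.symm
  have hcard' : Fintype.card ι = Module.finrank ℂ (Matrix (Fin N) (Fin N) ℂ) := by
    rw [Module.finrank_matrix]
    simp [hcard]
  let B := basisOfLinearIndependentOfCardEqFinrank hli hcard'
  have hcoe : ∀ i, B i = C i := fun i => by
    simp [B, coe_basisOfLinearIndependentOfCardEqFinrank]
  have hrep : ∑ i, B.repr X i • C i = X := by
    have := B.sum_repr X
    simpa only [hcoe] using this
  have hco : ∀ j, (X * C j).trace = B.repr X j := by
    intro j
    conv_lhs => rw [← hrep]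
    exact key _ j
  simp only [hco]
  exact hrep.symm

lemma sum_FF_kron {e : ℕ} (F : Fin (e+1) → Fin (e+2+1) → Matrix (Fin (e+2)) (Fin (e+2)) ℂ)
    (htraceless : ∀ n b, (F n b).trace = 0)
    (horth : ∀ n b n' b', ((F n b) * (F n' b')).trace = if n = n' ∧ b = b' then 1 else 0) :
    ∑ b : Fin (e+2+1), ∑ m : Fin (e+1), F m b ⊗ₖ F m b
      = swapMat (e+2) - (1 / ((e:ℂ)+2)) • 1 := by
  set u : ℂ := (((Real.sqrt ((e:ℝ)+2))⁻¹ : ℝ) : ℂ) with hu_def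
  have he : ((e:ℝ)+2) ≥ 0 := by positivity
  have huu : u * u = 1 / ((e:ℂ)+2) := by
    rw [hu_def, ← Complex.ofReal_mul, ← Real.sqrt_inv, Real.mul_self_sqrt (by positivity)]
    push_cast
    rw [one_div]
  set C : (Fin (e+1) × Fin (e+2+1)) ⊕ Unit → Matrix (Fin (e+2)) (Fin (e+2)) ℂ :=
    Sum.elim (fun p => F p.1 p.2) (fun _ => u • 1) with hC_def
  have horth' : ∀ i j, (C i * C j).trace = if i = j then 1 else 0 := by
    rintro (⟨n, b⟩ | ⟨⟩) (⟨n', b'⟩ | ⟨⟩)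
    · rw [hC_def]
      simp only [Sum.elim_inl]
      rw [horth]
      simp [Prod.ext_iff]
    · simp [hC_def, Matrix.mul_smul, Matrix.trace_smul, htraceless]
    · simp [hC_def, Matrix.smul_mul, Matrix.trace_smul, htraceless]
    · have hne : ((e:ℂ)+2) ≠ 0 := by
        intro hcon
        have := congrArg Complex.re hcon
        simp at this
        linarith [this]
      simp only [hC_def, Sum.elim_inr, Matrix.smul_mul, Matrix.mul_smul, one_mul,
        Matrix.trace_smul, smul_smul, Matrix.trace_one, smul_eq_mul, huu,
        Fintype.card_fin, if_true]
      push_cast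
      field_simp
  have hcard : Fintype.card ((Fin (e+1) × Fin (e+2+1)) ⊕ Unit) = (e+2) * (e+2) := by
    simp; ring
  have key := matrix_expansion C horth' hcard
  ext ⟨a, c⟩ ⟨b, d'⟩
  have h := congrFun (congrFun (key (Matrix.single b a 1)) c) d'
  simp only [Matrix.sum_apply, Matrix.smul_apply, trace_stdBasisMatrix_mul, smul_eq_mul] at h
  rw [Fintype.sum_sum_type] at h
  simp only [hC_def, Sum.elim_inl, Sum.elim_inr, Finset.sum_const, Finset.card_univ,
    Fintype.card_unit, one_smul, Matrix.smul_apply, smul_eq_mul] at h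
  have hsum : ∑ b' : Fin (e+2+1), ∑ m : Fin (e+1), (F m b' ⊗ₖ F m b') (a, c) (b, d')
      = ∑ p : Fin (e+1) × Fin (e+2+1), F p.1 p.2 a b * F p.1 p.2 c d' := by
    rw [Fintype.sum_prod_type, Finset.sum_comm]
    simp [Matrix.kroneckerMap_apply]
  simp only [Matrix.sub_apply, Matrix.sum_apply]
  rw [hsum]
  have hE : (Matrix.single b a (1:ℂ)) c d' = swapMat (e+2) (a, c) (b, d') := by
    simp only [Matrix.single, swapMat, Matrix.of_apply]
    exact if_congr ⟨fun ⟨x, y⟩ => ⟨y, x.symm⟩, fun ⟨x, y⟩ => ⟨y.symm, x⟩⟩ rfl rfl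
  have h1ab : ((1 : Matrix (Fin (e+2) × Fin (e+2)) (Fin (e+2) × Fin (e+2)) ℂ)) (a, c) (b, d')
      = (1 : Matrix (Fin (e+2)) (Fin (e+2)) ℂ) a b * (1 : Matrix (Fin (e+2)) (Fin (e+2)) ℂ) c d' := by
    by_cases h1 : a = b <;> by_cases h2 : c = d' <;>
      simp [Matrix.one_apply, Prod.ext_iff, h1, h2]
  rw [Matrix.smul_apply, h1ab, smul_eq_mul]
  rw [hE] at h
  have : (u * (1 : Matrix (Fin (e+2)) (Fin (e+2)) ℂ) a b) * (u * (1 : Matrix (Fin (e+2)) (Fin (e+2)) ℂ) c d')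
      = 1 / ((e:ℂ)+2) * ((1 : Matrix (Fin (e+2)) (Fin (e+2)) ℂ) a b * (1 : Matrix (Fin (e+2)) (Fin (e+2)) ℂ) c d') := by
    rw [← huu]; ring
  rw [this] at h
  linear_combination -h

section KG
variable {e : ℕ} (F : Fin (e+1) → Fin (e+2+1) → Matrix (Fin (e+2)) (Fin (e+2)) ℂ) (b : Fin (e+2+1))

lemma KGop_castSucc (n : Fin (e+1)) :
    KGop (d := e+2) F b (Fin.castSucc n)
      = (∑ m, F m b) - ((((e+2:ℕ) : ℝ) + Real.sqrt ((e+2:ℕ) : ℝ) : ℝ) : ℂ) • F n b := by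
  rw [KGop, dif_pos (show ((Fin.castSucc n : Fin (e+2)) : ℕ) < e + 2 - 1 by
    simpa using n.isLt)]
  rfl

lemma KGop_last :
    KGop (d := e+2) F b (Fin.last (e+1))
      = (((1:ℝ) + Real.sqrt ((e+2:ℕ) : ℝ) : ℝ) : ℂ) • (∑ m, F m b) := by
  rw [KGop, dif_neg (by simp)]
  rfl

lemma sum_KGop : ∑ n : Fin (e+2), KGop (d := e+2) F b n = 0 := by
  rw [Fin.sum_univ_castSucc]
  simp only [KGop_castSucc, KGop_last]
  rw [Finset.sum_sub_distrib, Finset.sum_const, Finset.card_univ, Fintype.card_fin,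
    ← Finset.smul_sum]
  rw [← Nat.cast_smul_eq_nsmul ℂ]
  rw [sub_add_eq_add_sub, ← add_smul, ← sub_smul]
  convert zero_smul ℂ (∑ m, F m b)
  push_cast
  ring

lemma sum_KGop_kron :
    ∑ n : Fin (e+2), KGop (d := e+2) F b n ⊗ₖ KGop (d := e+2) F b n
      = (((((e+2:ℕ) : ℝ) + Real.sqrt ((e+2:ℕ) : ℝ) : ℝ) : ℂ))^2 • ∑ m, F m b ⊗ₖ F m b := by
  have hs2 : (((Real.sqrt ((e+2:ℕ) : ℝ) : ℝ) : ℂ))^2 = ((e+2:ℕ) : ℂ) := by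
    rw [← Complex.ofReal_pow, Real.sq_sqrt (by positivity)]
    push_cast; ring
  set S : Matrix (Fin (e+2)) (Fin (e+2)) ℂ := ∑ m, F m b with hS
  set c : ℂ := ((((e+2:ℕ) : ℝ) + Real.sqrt ((e+2:ℕ) : ℝ) : ℝ) : ℂ) with hc
  set g : ℂ := (((1:ℝ) + Real.sqrt ((e+2:ℕ) : ℝ) : ℝ) : ℂ) with hg
  have expand : ∀ n : Fin (e+1), (S - c • F n b) ⊗ₖ (S - c • F n b)
      = S ⊗ₖ S - c • (S ⊗ₖ F n b) - c • (F n b ⊗ₖ S) + (c*c) • (F n b ⊗ₖ F n b) := by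
    intro n
    simp only [sub_kron, kron_sub, smul_kronecker, kronecker_smul, smul_smul]
    module
  rw [Fin.sum_univ_castSucc]
  simp only [KGop_castSucc, KGop_last, ← hS, ← hc, ← hg, expand]
  rw [show (g • S) ⊗ₖ (g • S) = (g*g) • (S ⊗ₖ S) by
    rw [smul_kronecker, kronecker_smul, smul_smul]]
  rw [Finset.sum_add_distrib, Finset.sum_sub_distrib, Finset.sum_sub_distrib,
    Finset.sum_const, Finset.card_univ, Fintype.card_fin,
    ← Finset.smul_sum, ← Finset.smul_sum, ← Finset.smul_sum,
    ← kron_sum, ← sum_kron, ← hS]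
  rw [← Nat.cast_smul_eq_nsmul ℂ]
  have hcoef : ((e+1:ℕ) : ℂ) - c - c + g*g = 0 := by
    rw [hc, hg]
    push_cast
    linear_combination (by rw [← Complex.ofReal_pow, Real.sq_sqrt (by positivity : ((e:ℝ)+2) ≥ 0)]; push_cast; ring :
      ((Real.sqrt ((e:ℝ)+2) : ℝ) : ℂ)^2 = (e:ℂ)+2)
  calc ((e+1:ℕ) : ℂ) • (S ⊗ₖ S) - c • (S ⊗ₖ S) - c • (S ⊗ₖ S)
        + (c*c) • ∑ m, F m b ⊗ₖ F m b + (g*g) • (S ⊗ₖ S)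
      = (((e+1:ℕ) : ℂ) - c - c + g*g) • (S ⊗ₖ S) + (c*c) • ∑ m, F m b ⊗ₖ F m b := by module
    _ = c^2 • ∑ m, F m b ⊗ₖ F m b := by rw [hcoef, zero_smul, zero_add, ← pow_two]

lemma sum_KGP_kron (t : ℝ) :
    ∑ n : Fin (e+2), KGP (d := e+2) F t b n ⊗ₖ KGP (d := e+2) F t b n
      = (1 / ((e+2:ℕ) : ℂ)) • 1
        + ((t:ℂ)^2 * (((((e+2:ℕ) : ℝ) + Real.sqrt ((e+2:ℕ) : ℝ) : ℝ) : ℂ))^2)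
          • ∑ m, F m b ⊗ₖ F m b := by
  set u : ℂ := 1 / ((e+2:ℕ) : ℂ) with hu
  have hne : ((e+2:ℕ) : ℂ) ≠ 0 := Nat.cast_ne_zero.mpr (by omega)
  have expand : ∀ n : Fin (e+2),
      KGP (d := e+2) F t b n ⊗ₖ KGP (d := e+2) F t b n
        = (u*u) • (1 : Matrix (Fin (e+2) × Fin (e+2)) (Fin (e+2) × Fin (e+2)) ℂ)
          + (u*(t:ℂ)) • ((1 : Matrix (Fin (e+2)) (Fin (e+2)) ℂ) ⊗ₖ KGop (d := e+2) F b n)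
          + ((t:ℂ)*u) • (KGop (d := e+2) F b n ⊗ₖ (1 : Matrix (Fin (e+2)) (Fin (e+2)) ℂ))
          + ((t:ℂ)*(t:ℂ)) • (KGop (d := e+2) F b n ⊗ₖ KGop (d := e+2) F b n) := by
    intro n
    rw [KGP, ← hu]
    simp only [add_kronecker, kronecker_add, smul_kronecker, kronecker_smul, smul_smul,
      Matrix.one_kronecker_one]
    module
  simp only [expand]
  rw [Finset.sum_add_distrib, Finset.sum_add_distrib, Finset.sum_add_distrib,
    Finset.sum_const, Finset.card_univ, Fintype.card_fin,
    ← Finset.smul_sum, ← Finset.smul_sum, ← Finset.smul_sum,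
    ← kron_sum, ← sum_kron, sum_KGop, kronecker_zero, zero_kronecker, smul_zero, smul_zero,
    add_zero, add_zero, sum_KGop_kron, smul_smul]
  rw [← Nat.cast_smul_eq_nsmul ℂ, smul_smul]
  have h1 : ((e+2:ℕ) : ℂ) * (u * u) = u := by
    rw [hu]; field_simp
  rw [h1]
  congr 1
  congr 1
  ring

end KG

/-- Proposition 3.1, bipartite core: For a complete set of MUMs of Kalev–Gour
form with κ = 1/d + t²(1+√d)²(d−1),
Σ_{b=1}^{d+1} Σ_{n=1}^{d} P_n^{(b)} ⊗ P_n^{(b)} ≤ (1+κ)(𝕀 ⊗ 𝕀). -/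
theorem stmt_14 {d : ℕ} (hd : 2 ≤ d)
    (F : Fin (d - 1) → Fin (d + 1) → Matrix (Fin d) (Fin d) ℂ)
    (hHerm : ∀ n b, (F n b).IsHermitian)
    (htraceless : ∀ n b, (F n b).trace = 0)
    (horth : ∀ n b n' b', ((F n b) * (F n' b')).trace = if n = n' ∧ b = b' then 1 else 0)
    (t κ : ℝ)
    (hκ : κ = 1 / d + t ^ 2 * (1 + Real.sqrt d) ^ 2 * (d - 1))
    (hpsd : ∀ b n, (KGP F t b n).PosSemidef) :
    ((((1 + κ) : ℝ) : ℂ) • (1 : Matrix (Fin d × Fin d) (Fin d × Fin d) ℂ)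
      - ∑ b : Fin (d + 1), ∑ n : Fin d, (KGP F t b n) ⊗ₖ (KGP F t b n)).PosSemidef := by
  obtain ⟨e, rfl⟩ : ∃ e, d = e + 2 := ⟨d - 2, by omega⟩
  subst hκ
  -- notation
  set s : ℝ := Real.sqrt ((e+2:ℕ) : ℝ) with hs
  have hs2 : ((s : ℝ) : ℂ)^2 = (e:ℂ)+2 := by
    rw [hs, ← Complex.ofReal_pow, Real.sq_sqrt (by positivity)]
    push_cast; ring
  have hne : ((e+2:ℕ) : ℂ) ≠ 0 := Nat.cast_ne_zero.mpr (by omega)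
  have hne2 : ((e:ℂ)+2) ≠ 0 := by
    have hh : ((((e:ℝ))+2 : ℝ) : ℂ) = (e:ℂ)+2 := by push_cast; ring
    rw [← hh]
    exact_mod_cast (by positivity : ((e:ℝ)+2) ≠ 0)
  -- the total sum
  have htot : ∑ b : Fin (e+2+1), ∑ n : Fin (e+2), (KGP (d := e+2) F t b n) ⊗ₖ (KGP (d := e+2) F t b n)
      = (((e+2+1 : ℕ) : ℂ) / ((e+2:ℕ) : ℂ)) • 1
        + ((t:ℂ)^2 * ((((e+2:ℕ) : ℝ) + s : ℝ) : ℂ)^2)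
          • (swapMat (e+2) - (1 / ((e:ℂ)+2)) • 1) := by
    rw [← sum_FF_kron F htraceless horth]
    simp only [sum_KGP_kron F _ t, ← hs]
    rw [Finset.sum_add_distrib, Finset.sum_const, Finset.card_univ, Fintype.card_fin,
      ← Finset.smul_sum, ← Nat.cast_smul_eq_nsmul ℂ, smul_smul]
    rw [mul_one_div]
  rw [htot]
  -- scalar bookkeeping
  set c2 : ℂ := ((((e+2:ℕ) : ℝ) + s : ℝ) : ℂ)^2 with hc2
  have hc2' : c2 = ((e+2:ℕ) : ℂ) * (1 + (s:ℂ))^2 := by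
    rw [hc2]
    push_cast
    linear_combination (-1 - (e:ℂ)) * hs2
  set ρ : ℝ := t^2 * ((e+2:ℕ) : ℝ) * (1 + s)^2 with hρ
  have hρ0 : 0 ≤ ρ := by
    rw [hρ]
    positivity
  have hEq : (((1 + (1 / ((e+2:ℕ):ℝ) + t ^ 2 * (1 + s) ^ 2 * (((e+2:ℕ):ℝ) - 1)) : ℝ)) : ℂ)
        • (1 : Matrix (Fin (e+2) × Fin (e+2)) (Fin (e+2) × Fin (e+2)) ℂ)
      - ((((e+2+1 : ℕ) : ℂ) / ((e+2:ℕ) : ℂ)) • 1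
        + ((t:ℂ)^2 * c2) • (swapMat (e+2) - (1 / ((e:ℂ)+2)) • 1))
      = ((ρ : ℝ) : ℂ) • (1 - swapMat (e+2)) := by
    have h1 : (((1 + (1 / ((e+2:ℕ):ℝ) + t ^ 2 * (1 + s) ^ 2 * (((e+2:ℕ):ℝ) - 1)) : ℝ)) : ℂ)
        - ((e+2+1 : ℕ) : ℂ) / ((e+2:ℕ) : ℂ) + ((t:ℂ)^2 * c2) * (1 / ((e:ℂ)+2))
        = ((ρ : ℝ) : ℂ) := by
      rw [hc2', hρ]
      push_cast
      field_simp
      ring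
    have h2 : (t:ℂ)^2 * c2 = ((ρ : ℝ) : ℂ) := by
      rw [hc2', hρ]
      push_cast
      ring
    calc (((1 + (1 / ((e+2:ℕ):ℝ) + t ^ 2 * (1 + s) ^ 2 * (((e+2:ℕ):ℝ) - 1)) : ℝ)) : ℂ)
        • (1 : Matrix (Fin (e+2) × Fin (e+2)) (Fin (e+2) × Fin (e+2)) ℂ)
      - ((((e+2+1 : ℕ) : ℂ) / ((e+2:ℕ) : ℂ)) • 1
        + ((t:ℂ)^2 * c2) • (swapMat (e+2) - (1 / ((e:ℂ)+2)) • 1))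
        = ((((1 + (1 / ((e+2:ℕ):ℝ) + t ^ 2 * (1 + s) ^ 2 * (((e+2:ℕ):ℝ) - 1)) : ℝ)) : ℂ)
            - ((e+2+1 : ℕ) : ℂ) / ((e+2:ℕ) : ℂ) + ((t:ℂ)^2 * c2) * (1 / ((e:ℂ)+2))) • 1
          - ((t:ℂ)^2 * c2) • swapMat (e+2) := by module
      _ = ((ρ : ℝ) : ℂ) • (1 - swapMat (e+2)) := by rw [h1, h2]; module
  rw [hEq]
  set r : ℝ := Real.sqrt (ρ/2) with hr_def
  have hfact : ((ρ : ℝ) : ℂ) • ((1 : Matrix (Fin (e+2) × Fin (e+2)) (Fin (e+2) × Fin (e+2)) ℂ) - swapMat (e+2))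
      = (((r : ℝ) : ℂ) • ((1 : Matrix (Fin (e+2) × Fin (e+2)) (Fin (e+2) × Fin (e+2)) ℂ) - swapMat (e+2)))ᴴ
        * (((r : ℝ) : ℂ) • ((1 : Matrix (Fin (e+2) × Fin (e+2)) (Fin (e+2) × Fin (e+2)) ℂ) - swapMat (e+2))) := by
    have hNN : ((1 : Matrix (Fin (e+2) × Fin (e+2)) (Fin (e+2) × Fin (e+2)) ℂ) - swapMat (e+2))
        * ((1 : Matrix (Fin (e+2) × Fin (e+2)) (Fin (e+2) × Fin (e+2)) ℂ) - swapMat (e+2))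
        = (2:ℂ) • ((1 : Matrix (Fin (e+2) × Fin (e+2)) (Fin (e+2) × Fin (e+2)) ℂ) - swapMat (e+2)) := by
      rw [mul_sub, sub_mul, sub_mul, swapMat_mul_self, mul_one, mul_one, one_mul, two_smul]
      abel
    rw [Matrix.conjTranspose_smul, Matrix.conjTranspose_sub, Matrix.conjTranspose_one,
      swapMat_conjTranspose, Matrix.smul_mul, Matrix.mul_smul, smul_smul, hNN, smul_smul]
    congr 1
    simp only [Complex.star_def, Complex.conj_ofReal]
    have h3 : ((r : ℝ) : ℂ) * ((r : ℝ) : ℂ) = ((ρ : ℝ) : ℂ) / 2 := by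
      rw [← Complex.ofReal_mul, hr_def, Real.mul_self_sqrt (by linarith)]
      push_cast
      ring
    linear_combination -2 * h3
  rw [hfact]
  exact Matrix.posSemidef_conjTranspose_mul_self _
end

section
/- Let ρ be a density operator on H = (ℂ^d)^{⊗M}, and {𝐏_n^{(b)}} as above built from a complete set of Kalev–Gour MUMs with parameter κ. Then Σ_{b=1}^{d+1} Σ_{n=1}^{d} (tr(ρ 𝐏_n^{(b)}))² ≥ M²(d+1)/d; consequently Σ_{b=1}^{d+1} Σ_{n=1}^{d} V(ρ, 𝐏_n^{(b)}) ≤ M²(κ − 1/d) + M(dκ − 1), where V(ρ,A) = tr(ρA²) − (tr ρA)². -/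
open Matrix ComplexOrder

/-- The operator 𝕀^{⊗(i−1)} ⊗ A ⊗ 𝕀^{⊗(M−i)} acting on (ℂ^d)^{⊗M}. -/
def localOp {M d : ℕ} (i : Fin M) (A : Matrix (Fin d) (Fin d) ℂ) :
    Matrix (Fin M → Fin d) (Fin M → Fin d) ℂ :=
  fun x y => if (∀ j, j ≠ i → x j = y j) then A (x i) (y i) else 0


open Matrix ComplexOrder
open scoped Kronecker

namespace Stmt16
variable {M d : ℕ}

open scoped MatrixOrder in
lemma psd_eq_ctm {n : Type*} [Fintype n] [DecidableEq n] {A : Matrix n n ℂ}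
    (hA : A.PosSemidef) : ∃ B : Matrix n n ℂ, A = Bᴴ * B :=
  CStarAlgebra.nonneg_iff_eq_star_mul_self.mp hA.nonneg

lemma trace_ctm_nonneg {m n : Type*} [Fintype m] [Fintype n] (E : Matrix m n ℂ) :
    0 ≤ (Eᴴ * E).trace := by
  rw [Matrix.trace]
  refine Finset.sum_nonneg fun j _ => ?_
  rw [Matrix.diag_apply, Matrix.mul_apply]
  refine Finset.sum_nonneg fun k _ => ?_
  simpa [Matrix.conjTranspose_apply] using star_mul_self_nonneg (E k j)

lemma trace_mul_psd_nonneg {n : Type*} [Fintype n] [DecidableEq n]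
    {A B : Matrix n n ℂ} (hA : A.PosSemidef) (hB : B.PosSemidef) :
    0 ≤ (A * B).trace := by
  obtain ⟨C, rfl⟩ := psd_eq_ctm hA
  obtain ⟨D, rfl⟩ := psd_eq_ctm hB
  have h1 : Cᴴ * C * (Dᴴ * D) = (Cᴴ * C * Dᴴ) * D := by
    simp only [Matrix.mul_assoc]
  rw [h1, Matrix.trace_mul_comm]
  have h2 : D * (Cᴴ * C * Dᴴ) = (C * Dᴴ)ᴴ * (C * Dᴴ) := by
    rw [Matrix.conjTranspose_mul, Matrix.conjTranspose_conjTranspose]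
    simp only [Matrix.mul_assoc]
  rw [h2]
  exact trace_ctm_nonneg _

lemma trace_mul_psd_re_nonneg {n : Type*} [Fintype n] [DecidableEq n]
    {A B : Matrix n n ℂ} (hA : A.PosSemidef) (hB : B.PosSemidef) :
    0 ≤ ((A * B).trace).re := by
  have := trace_mul_psd_nonneg hA hB
  rw [Complex.le_def] at this
  simpa using this.1

variable {M d : ℕ}

def oneSplit (i : Fin M) (d : ℕ) :
    (Fin M → Fin d) ≃ (Fin d × ({k : Fin M // k ≠ i} → Fin d)) where
  toFun x := (x i, fun k => x k.1)
  invFun p := fun k => if h : k = i then p.1 else p.2 ⟨k, h⟩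
  left_inv x := by
    funext k
    by_cases h : k = i <;> simp [h]
  right_inv p := by
    obtain ⟨a, w⟩ := p
    refine Prod.ext (by simp) ?_
    funext k
    simp [k.prop]

lemma localOp_eq_submatrix (i : Fin M) (A : Matrix (Fin d) (Fin d) ℂ) :
    localOp i A = ((A ⊗ₖ (1 : Matrix ({k : Fin M // k ≠ i} → Fin d)
        ({k : Fin M // k ≠ i} → Fin d) ℂ)).submatrix (oneSplit i d) (oneSplit i d)) := by
  ext x y
  simp only [localOp, Matrix.submatrix_apply, oneSplit, Equiv.coe_fn_mk,
    Matrix.kroneckerMap_apply, Matrix.one_apply]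
  by_cases h : ∀ j, j ≠ i → x j = y j
  · have he : (fun k : {k : Fin M // k ≠ i} => x k.1) = fun k => y k.1 := by
      funext k; exact h k.1 k.prop
    rw [if_pos h, if_pos he, mul_one]
  · have he : (fun k : {k : Fin M // k ≠ i} => x k.1) ≠ fun k => y k.1 := by
      intro e
      exact h fun j hj => congrFun e ⟨j, hj⟩
    rw [if_neg h, if_neg he, mul_zero]

lemma localOp_mul (i : Fin M) (A B : Matrix (Fin d) (Fin d) ℂ) :
    localOp i A * localOp i B = localOp i (A * B) := by
  rw [localOp_eq_submatrix, localOp_eq_submatrix, localOp_eq_submatrix,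
    Matrix.submatrix_mul_equiv, ← Matrix.mul_kronecker_mul, Matrix.one_mul]

lemma localOp_add (i : Fin M) (A B : Matrix (Fin d) (Fin d) ℂ) :
    localOp i (A + B) = localOp i A + localOp i B := by
  ext x y
  simp only [localOp, Matrix.add_apply]
  split <;> simp

lemma localOp_smul (i : Fin M) (c : ℂ) (A : Matrix (Fin d) (Fin d) ℂ) :
    localOp i (c • A) = c • localOp i A := by
  ext x y
  simp only [localOp, Matrix.smul_apply, smul_eq_mul]
  split <;> simp

lemma localOp_zero (i : Fin M) : localOp (d := d) i 0 = 0 := by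
  ext x y
  simp only [localOp, Matrix.zero_apply]
  split <;> simp

lemma localOp_sum {α : Type*} (s : Finset α) (f : α → Matrix (Fin d) (Fin d) ℂ) (i : Fin M) :
    localOp i (∑ a ∈ s, f a) = ∑ a ∈ s, localOp i (f a) := by
  ext x y
  simp only [localOp, Matrix.sum_apply]
  split <;> simp

lemma localOp_one (i : Fin M) : localOp (d := d) i 1 = 1 := by
  rw [localOp_eq_submatrix, Matrix.one_kronecker_one, Matrix.submatrix_one_equiv]




def pairOp (i j : Fin M) (Q : Matrix (Fin d × Fin d) (Fin d × Fin d) ℂ) :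
    Matrix (Fin M → Fin d) (Fin M → Fin d) ℂ :=
  fun x y => if (∀ k, k ≠ i → k ≠ j → x k = y k) then Q (x i, x j) (y i, y j) else 0

def pairSplit {i j : Fin M} (hij : i ≠ j) (d : ℕ) :
    (Fin M → Fin d) ≃ ((Fin d × Fin d) × ({k : Fin M // k ≠ i ∧ k ≠ j} → Fin d)) where
  toFun x := ((x i, x j), fun k => x k.1)
  invFun p := fun k => if h : k = i then p.1.1 else if h' : k = j then p.1.2 else p.2 ⟨k, h, h'⟩
  left_inv x := by
    funext k
    by_cases h : k = i
    · simp [h]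
    · by_cases h' : k = j
      · subst h'; simp [h]
      · simp [h, h']
  right_inv p := by
    obtain ⟨⟨a, b⟩, w⟩ := p
    refine Prod.ext (Prod.ext (by simp) (by simp [hij.symm])) ?_
    funext k
    simp [k.prop.1, k.prop.2]

lemma pairOp_eq_submatrix {i j : Fin M} (hij : i ≠ j)
    (Q : Matrix (Fin d × Fin d) (Fin d × Fin d) ℂ) :
    pairOp i j Q = ((Q ⊗ₖ (1 : Matrix ({k : Fin M // k ≠ i ∧ k ≠ j} → Fin d)
        ({k : Fin M // k ≠ i ∧ k ≠ j} → Fin d) ℂ)).submatrix (pairSplit hij d) (pairSplit hij d)) := by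
  ext x y
  simp only [pairOp, Matrix.submatrix_apply, pairSplit, Equiv.coe_fn_mk,
    Matrix.kroneckerMap_apply, Matrix.one_apply]
  by_cases h : ∀ k, k ≠ i → k ≠ j → x k = y k
  · have he : (fun k : {k : Fin M // k ≠ i ∧ k ≠ j} => x k.1) = fun k => y k.1 := by
      funext k; exact h k.1 k.prop.1 k.prop.2
    rw [if_pos h, if_pos he, mul_one]
  · have he : (fun k : {k : Fin M // k ≠ i ∧ k ≠ j} => x k.1) ≠ fun k => y k.1 := by
      intro e
      exact h fun k hk1 hk2 => congrFun e ⟨k, hk1, hk2⟩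
    rw [if_neg h, if_neg he, mul_zero]

lemma pairOp_one {i j : Fin M} (hij : i ≠ j) :
    pairOp (d := d) i j 1 = 1 := by
  rw [pairOp_eq_submatrix hij, Matrix.one_kronecker_one, Matrix.submatrix_one_equiv]

lemma pairOp_smul (i j : Fin M) (c : ℂ) (Q : Matrix (Fin d × Fin d) (Fin d × Fin d) ℂ) :
    pairOp i j (c • Q) = c • pairOp i j Q := by
  ext x y
  simp only [pairOp, Matrix.smul_apply, smul_eq_mul]
  split <;> simp

lemma pairOp_sub (i j : Fin M) (Q R : Matrix (Fin d × Fin d) (Fin d × Fin d) ℂ) :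
    pairOp i j (Q - R) = pairOp i j Q - pairOp i j R := by
  ext x y
  simp only [pairOp, Matrix.sub_apply]
  split <;> simp

lemma pairOp_sum {α : Type*} (s : Finset α) (f : α → Matrix (Fin d × Fin d) (Fin d × Fin d) ℂ)
    (i j : Fin M) :
    pairOp i j (∑ a ∈ s, f a) = ∑ a ∈ s, pairOp i j (f a) := by
  ext x y
  simp only [pairOp, Matrix.sum_apply]
  split <;> simp

lemma kronecker_one_psd {n s : Type*} [Fintype n] [DecidableEq n] [Fintype s] [DecidableEq s]
    {Q : Matrix n n ℂ} (hQ : Q.PosSemidef) :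
    (Q ⊗ₖ (1 : Matrix s s ℂ)).PosSemidef := by
  obtain ⟨C, rfl⟩ := psd_eq_ctm hQ
  have h1 : (C ⊗ₖ (1 : Matrix s s ℂ))ᴴ = Cᴴ ⊗ₖ (1 : Matrix s s ℂ) := by
    ext ⟨a, b⟩ ⟨c, e⟩
    simp only [Matrix.conjTranspose_apply, Matrix.kroneckerMap_apply, star_mul',
      apply_ite (star : ℂ → ℂ), star_one, star_zero, Matrix.one_apply]
    rw [show (if e = b then (1:ℂ) else 0) = (if b = e then 1 else 0) from
      if_congr eq_comm rfl rfl, mul_comm]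
  have h2 : (Cᴴ * C) ⊗ₖ (1 : Matrix s s ℂ) = (C ⊗ₖ (1 : Matrix s s ℂ))ᴴ * (C ⊗ₖ 1) := by
    rw [h1, ← Matrix.mul_kronecker_mul, Matrix.one_mul]
  rw [h2]
  exact Matrix.posSemidef_conjTranspose_mul_self _

lemma pairOp_posSemidef {i j : Fin M} (hij : i ≠ j)
    {Q : Matrix (Fin d × Fin d) (Fin d × Fin d) ℂ} (hQ : Q.PosSemidef) :
    (pairOp i j Q).PosSemidef := by
  rw [pairOp_eq_submatrix hij]
  exact (kronecker_one_psd hQ).submatrix _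

lemma localOp_mul_localOp {i j : Fin M} (hij : i ≠ j) (A B : Matrix (Fin d) (Fin d) ℂ) :
    localOp i A * localOp j B = pairOp i j (A ⊗ₖ B) := by
  ext x y
  rw [Matrix.mul_apply]
  simp only [localOp, pairOp, Matrix.kroneckerMap_apply]
  by_cases h : ∀ k, k ≠ i → k ≠ j → x k = y k
  · rw [if_pos h, Finset.sum_eq_single (Function.update x i (y i))]
    · have c1 : ∀ k, k ≠ i → x k = Function.update x i (y i) k := fun k hk =>
        (Function.update_of_ne hk _ _).symm
      have c2 : ∀ k, k ≠ j → Function.update x i (y i) k = y k := by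
        intro k hk
        by_cases hki : k = i
        · subst hki; simp
        · rw [Function.update_of_ne hki]; exact h k hki hk
      rw [if_pos c1, if_pos c2, Function.update_self, Function.update_of_ne hij.symm]
    · intro z _ hz
      by_cases h1 : ∀ k, k ≠ i → x k = z k
      · by_cases h2 : ∀ k, k ≠ j → z k = y k
        · exfalso
          apply hz
          funext k
          by_cases hk : k = i
          · subst hk; rw [Function.update_self]; exact h2 k hij
          · rw [Function.update_of_ne hk]; exact (h1 k hk).symm
        · rw [if_neg h2, mul_zero]
      · rw [if_neg h1, zero_mul]
    · intro hmem
      exact absurd (Finset.mem_univ _) hmem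
  · rw [if_neg h]
    refine Finset.sum_eq_zero fun z _ => ?_
    by_cases h1 : ∀ k, k ≠ i → x k = z k
    · by_cases h2 : ∀ k, k ≠ j → z k = y k
      · exact absurd (fun k hk1 hk2 => (h1 k hk1).trans (h2 k hk2)) h
      · rw [if_neg h2, mul_zero]
    · rw [if_neg h1, zero_mul]




/-- The swap operator on `ℂ^d ⊗ ℂ^d`. -/
def Sw (d : ℕ) : Matrix (Fin d × Fin d) (Fin d × Fin d) ℂ :=
  fun p q => if p.1 = q.2 ∧ p.2 = q.1 then 1 else 0

lemma sw_mulVec (x : Fin d × Fin d → ℂ) (p : Fin d × Fin d) :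
    (Sw d *ᵥ x) p = x (p.2, p.1) := by
  rw [Matrix.mulVec, dotProduct]
  rw [Finset.sum_congr rfl (fun q _ => show (Sw d) p q * x q = if q = (p.2, p.1) then x q else 0
    from by
      rw [Sw]
      by_cases h : q = (p.2, p.1)
      · subst h; simp
      · rw [if_neg ?_, if_neg h, zero_mul]
        rintro ⟨h1, h2⟩
        exact h (Prod.ext h2.symm h1.symm))]
  rw [Finset.sum_ite_eq' Finset.univ (p.2, p.1) x]
  simp

lemma sw_hermitian : (Sw d).IsHermitian := by
  ext p q
  simp only [Matrix.conjTranspose_apply, Sw, apply_ite (star : ℂ → ℂ), star_one, star_zero]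
  exact if_congr (by constructor <;> exact fun ⟨h1, h2⟩ => ⟨h2.symm, h1.symm⟩) rfl rfl

lemma one_sub_sw_psd : ((1 : Matrix (Fin d × Fin d) (Fin d × Fin d) ℂ) - Sw d).PosSemidef := by
  refine Matrix.posSemidef_iff_dotProduct_mulVec.mpr ⟨?_, ?_⟩
  · exact Matrix.isHermitian_one.sub sw_hermitian
  · intro x
    have key : star x ⬝ᵥ (((1 : Matrix (Fin d × Fin d) (Fin d × Fin d) ℂ) - Sw d) *ᵥ x)
        = (((2:ℝ)⁻¹ * ∑ p : Fin d × Fin d, Complex.normSq (x p - x (p.2, p.1)) : ℝ) : ℂ) := by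
      have swap1 : ∑ p : Fin d × Fin d, (starRingEnd ℂ) (x (p.2, p.1)) * x (p.2, p.1)
          = ∑ p : Fin d × Fin d, (starRingEnd ℂ) (x p) * x p :=
        Fintype.sum_equiv (Equiv.prodComm _ _) _ _ (fun p => rfl)
      have swap2 : ∑ p : Fin d × Fin d, (starRingEnd ℂ) (x (p.2, p.1)) * x p
          = ∑ p : Fin d × Fin d, (starRingEnd ℂ) (x p) * x (p.2, p.1) :=
        Fintype.sum_equiv (Equiv.prodComm _ _) _ _ (fun p => rfl)
      push_cast
      rw [Finset.sum_congr rfl (fun p _ => show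
        ((Complex.normSq (x p - x (p.2, p.1)) : ℂ))
          = (starRingEnd ℂ) (x p - x (p.2,p.1)) * (x p - x (p.2,p.1)) from by
        rw [← Complex.normSq_eq_conj_mul_self])]
      simp only [dotProduct, Matrix.sub_mulVec, Matrix.one_mulVec, Pi.sub_apply, sw_mulVec,
        Pi.star_apply, Complex.star_def, map_sub, mul_sub, sub_mul]
      rw [Finset.sum_sub_distrib, Finset.sum_sub_distrib, Finset.sum_sub_distrib,
        Finset.sum_sub_distrib]
      linear_combination -(2:ℂ)⁻¹ * swap1 + (2:ℂ)⁻¹ * swap2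
    rw [key, Complex.zero_le_real]
    exact mul_nonneg (by norm_num) (Finset.sum_nonneg fun p _ => Complex.normSq_nonneg _)

lemma sum_fin_split (hd : 1 ≤ d) {N : Type*} [AddCommMonoid N] (f : Fin d → N) :
    ∑ n, f n = (∑ m : Fin (d - 1), f ⟨m.1, by omega⟩) + f ⟨d - 1, by omega⟩ := by
  have hd1 : d - 1 + 1 = d := by omega
  rw [← (finCongr hd1).sum_comp f, Fin.sum_univ_castSucc]
  exact congrArg₂ (· + ·)
    (Finset.sum_congr rfl fun m _ => congrArg f (Fin.ext (by simp)))
    (congrArg f (Fin.ext (by simp)))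




variable (F : Fin (d - 1) → Fin (d + 1) → Matrix (Fin d) (Fin d) ℂ)

lemma KGop_lt (b : Fin (d+1)) (m : Fin (d-1)) (h : (m.1 : ℕ) < d) :
    KGop F b ⟨m.1, h⟩ = (∑ m', F m' b) - (((d : ℝ) + Real.sqrt d : ℝ) : ℂ) • F m b := by
  rw [KGop, dif_pos m.isLt]

lemma KGop_last (hd : 1 ≤ d) :
    ∀ b, KGop F b ⟨d - 1, by omega⟩ = (((1 : ℝ) + Real.sqrt d : ℝ) : ℂ) • (∑ m', F m' b) := by
  intro b
  rw [KGop, dif_neg (by simp)]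

lemma sqrtd_sq : ((Real.sqrt d : ℝ) : ℂ) ^ 2 = (d : ℂ) := by
  rw [← Complex.ofReal_pow, Real.sq_sqrt (by positivity)]
  norm_num

lemma sum_KGop (hd : 2 ≤ d) (b : Fin (d+1)) : ∑ n : Fin d, KGop F b n = 0 := by
  rw [sum_fin_split (by omega)]
  simp only [KGop_lt F b, KGop_last F (by omega : 1 ≤ d) b]
  rw [Finset.sum_sub_distrib, Finset.sum_const, ← Finset.smul_sum, Finset.card_univ,
    Fintype.card_fin, ← Nat.cast_smul_eq_nsmul ℂ]
  match_scalars
  all_goals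
    push_cast [Nat.cast_sub (by omega : 1 ≤ d)]
    ring

variable {N : Type*} [AddCommGroup N] [Module ℂ N]

lemma sum_B_KGop (hd : 2 ≤ d)
    (B : Matrix (Fin d) (Fin d) ℂ →ₗ[ℂ] Matrix (Fin d) (Fin d) ℂ →ₗ[ℂ] N) (b : Fin (d+1)) :
    ∑ n : Fin d, (B (KGop F b n)) (KGop F b n)
      = ((((d:ℝ) + Real.sqrt d)^2 : ℝ) : ℂ) • ∑ m, (B (F m b)) (F m b) := by
  set S : Matrix (Fin d) (Fin d) ℂ := ∑ m', F m' b with hS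
  rw [sum_fin_split (by omega : 1 ≤ d)]
  simp only [KGop_lt F b, KGop_last F (by omega : 1 ≤ d) b]
  have expand : ∀ m : Fin (d-1), (B (S - (((d:ℝ) + Real.sqrt d : ℝ) : ℂ) • F m b)) (S - (((d:ℝ) + Real.sqrt d : ℝ) : ℂ) • F m b)
      = (B S) S - (((d:ℝ) + Real.sqrt d : ℝ) : ℂ) • (B S) (F m b) - (((d:ℝ) + Real.sqrt d : ℝ) : ℂ) • (B (F m b)) S + ((((d:ℝ) + Real.sqrt d : ℝ) : ℂ)*(((d:ℝ) + Real.sqrt d : ℝ) : ℂ)) • (B (F m b)) (F m b) := by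
    intro m
    simp only [map_sub, _root_.map_smul, LinearMap.sub_apply, LinearMap.smul_apply, smul_sub, smul_smul]
    abel
  rw [Finset.sum_congr rfl (fun m _ => expand m)]
  have h1 : ∑ m : Fin (d-1), (B S) (F m b) = (B S) S := by rw [← map_sum]
  have h2 : ∑ m : Fin (d-1), (B (F m b)) S = (B S) S := by
    rw [← LinearMap.sum_apply, ← map_sum]
  have h3 : (B ((((1:ℝ) + Real.sqrt d : ℝ) : ℂ) • S)) ((((1:ℝ) + Real.sqrt d : ℝ) : ℂ) • S)
      = ((((1:ℝ) + Real.sqrt d : ℝ) : ℂ) * (((1:ℝ) + Real.sqrt d : ℝ) : ℂ)) • (B S) S := by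
    simp only [_root_.map_smul, LinearMap.smul_apply, smul_smul]
  rw [← hS]
  simp only [Finset.sum_add_distrib, Finset.sum_sub_distrib, ← Finset.smul_sum, h1, h2, h3,
    Finset.sum_const, Finset.card_univ, Fintype.card_fin, ← Nat.cast_smul_eq_nsmul ℂ]
  match_scalars
  · have hs := sqrtd_sq (d := d)
    push_cast [Nat.cast_sub (by omega : 1 ≤ d)]
    linear_combination hs
  · push_cast
    ring

lemma sum_B_KGP (hd : 2 ≤ d) (t : ℝ)
    (B : Matrix (Fin d) (Fin d) ℂ →ₗ[ℂ] Matrix (Fin d) (Fin d) ℂ →ₗ[ℂ] N) (b : Fin (d+1)) :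
    ∑ n : Fin d, (B (KGP F t b n)) (KGP F t b n)
      = (((1:ℝ)/d : ℝ) : ℂ) • (B 1) 1
        + ((t^2 * ((d:ℝ) + Real.sqrt d)^2 : ℝ) : ℂ) • ∑ m, (B (F m b)) (F m b) := by
  have expand : ∀ n, (B (KGP F t b n)) (KGP F t b n)
      = ((1/(d:ℂ)) * (1/(d:ℂ))) • (B 1) 1 + ((1/(d:ℂ)) * t) • (B 1) (KGop F b n)
        + ((t:ℂ) * (1/(d:ℂ))) • (B (KGop F b n)) 1
        + ((t:ℂ) * t) • (B (KGop F b n)) (KGop F b n) := by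
    intro n
    simp only [KGP, map_add, _root_.map_smul, LinearMap.add_apply, LinearMap.smul_apply, smul_add,
      smul_smul]
    module
  rw [Finset.sum_congr rfl (fun n _ => expand n)]
  have h1 : ∑ n : Fin d, (B 1) (KGop F b n) = 0 := by
    rw [← map_sum, sum_KGop F hd b, map_zero]
  have h2 : ∑ n : Fin d, (B (KGop F b n)) 1 = 0 := by
    rw [← LinearMap.sum_apply, ← map_sum, sum_KGop F hd b, map_zero, LinearMap.zero_apply]
  simp only [Finset.sum_add_distrib, ← Finset.smul_sum, h1, h2, smul_zero, add_zero,
    sum_B_KGop F hd B b, Finset.sum_const, Finset.card_univ, Fintype.card_fin,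
    ← Nat.cast_smul_eq_nsmul ℂ, smul_smul]
  have hd0 : (d:ℂ) ≠ 0 := Nat.cast_ne_zero.mpr (by omega)
  match_scalars
  · field_simp
  · push_cast
    ring




lemma trace_single_mul {n : Type*} [Fintype n] [DecidableEq n] (k i : n) (A : Matrix n n ℂ) :
    (Matrix.single k i 1 * A).trace = A i k := by
  rw [Matrix.trace]
  rw [Finset.sum_congr rfl (fun a _ => show (Matrix.single k i 1 * A).diag a
      = if a = k then A i a else 0 from ?_)]
  · simp
  · rw [Matrix.diag_apply, Matrix.mul_apply]
    by_cases h : a = k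
    · subst h
      rw [Finset.sum_congr rfl (fun b _ => show Matrix.single a i 1 a b * A b a
          = if b = i then A b a else 0 from by
        by_cases hb : b = i
        · subst hb; simp [Matrix.single]
        · simp [Matrix.single, hb, Ne.symm hb]), Finset.sum_ite_eq' Finset.univ i]
      simp
    · rw [if_neg h]
      refine Finset.sum_eq_zero fun b _ => ?_
      simp [Matrix.single, Ne.symm h]

lemma comp (hd : 2 ≤ d) (F : Fin (d - 1) → Fin (d + 1) → Matrix (Fin d) (Fin d) ℂ)
    (htraceless : ∀ n b, (F n b).trace = 0)
    (horth : ∀ n b n' b', ((F n b) * (F n' b')).trace = if n = n' ∧ b = b' then 1 else 0)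
    (i j k l : Fin d) :
    ∑ b : Fin (d+1), ∑ m : Fin (d-1), F m b i k * F m b j l
      = (if k = j ∧ i = l then (1:ℂ) else 0)
        - ((d:ℂ))⁻¹ * ((if i = k then (1:ℂ) else 0) * (if j = l then (1:ℂ) else 0)) := by
  classical
  have hdR : (0:ℝ) < (d:ℝ) := by exact_mod_cast (by omega : 0 < d)
  have hdC : (d:ℂ) ≠ 0 := Nat.cast_ne_zero.mpr (by omega)
  set r : ℂ := (((Real.sqrt d)⁻¹ : ℝ) : ℂ) with hr
  have hrr : r * r = ((d:ℂ))⁻¹ := by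
    rw [hr, ← Complex.ofReal_mul, ← mul_inv, Real.mul_self_sqrt hdR.le]
    push_cast
    ring
  set G : (Fin (d-1) × Fin (d+1)) ⊕ Unit → Matrix (Fin d) (Fin d) ℂ :=
    Sum.elim (fun p => F p.1 p.2) (fun _ => r • 1) with hG
  have horthG : ∀ β γ, (G β * G γ).trace = if β = γ then 1 else 0 := by
    rintro (p | u) (q | v)
    · simp only [hG, Sum.elim_inl]
      rw [horth]
      refine if_congr ?_ rfl rfl
      rw [Sum.inl.injEq, Prod.ext_iff]
    · simp only [hG, Sum.elim_inl, Sum.elim_inr]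
      rw [Matrix.mul_smul, Matrix.mul_one, Matrix.trace_smul, htraceless, smul_zero]
      simp
    · simp only [hG, Sum.elim_inl, Sum.elim_inr]
      rw [Matrix.smul_mul, Matrix.one_mul, Matrix.trace_smul, htraceless, smul_zero]
      simp
    · simp only [hG, Sum.elim_inr]
      rw [Matrix.smul_mul, Matrix.one_mul, Matrix.trace_smul, Matrix.trace_smul, Matrix.trace_one]
      simp only [smul_eq_mul, Fintype.card_fin]
      rw [← mul_assoc, hrr, inv_mul_cancel₀ hdC]
      simp
  have hli : LinearIndependent ℂ G := by
    rw [Fintype.linearIndependent_iff]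
    intro g hg γ
    have h0 : ((∑ β, g β • G β) * G γ).trace = 0 := by
      rw [hg, Matrix.zero_mul, Matrix.trace_zero]
    rw [Finset.sum_mul] at h0
    simp only [Matrix.smul_mul] at h0
    rw [Matrix.trace_sum] at h0
    simp only [Matrix.trace_smul, horthG, smul_eq_mul, mul_ite, mul_one, mul_zero] at h0
    rwa [Finset.sum_ite_eq' Finset.univ γ g, if_pos (Finset.mem_univ _)] at h0
  have hcard : Fintype.card ((Fin (d-1) × Fin (d+1)) ⊕ Unit)
      = Module.finrank ℂ (Matrix (Fin d) (Fin d) ℂ) := by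
    rw [Module.finrank_matrix]
    simp only [Fintype.card_sum, Fintype.card_prod, Fintype.card_fin, Fintype.card_unit,
      Module.finrank_self, mul_one]
    obtain ⟨e, rfl⟩ : ∃ e, d = e + 1 := ⟨d - 1, by omega⟩
    simp only [Nat.add_sub_cancel]
    ring
  set 𝒷 : Module.Basis _ ℂ (Matrix (Fin d) (Fin d) ℂ) :=
    basisOfLinearIndependentOfCardEqFinrank hli hcard with h𝒷
  have hcoe : ⇑𝒷 = G := coe_basisOfLinearIndependentOfCardEqFinrank hli hcard
  have hexp : ∀ X : Matrix (Fin d) (Fin d) ℂ, X = ∑ γ, ((X * G γ).trace) • G γ := by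
    intro X
    have hXr : X = ∑ β, 𝒷.repr X β • G β := by
      conv_lhs => rw [← 𝒷.sum_repr X]
      rw [hcoe]
    have hrepr : ∀ γ, (X * G γ).trace = 𝒷.repr X γ := by
      intro γ
      conv_lhs => rw [hXr]
      rw [Finset.sum_mul, Matrix.trace_sum]
      simp only [Matrix.smul_mul, Matrix.trace_smul, horthG, smul_eq_mul, mul_ite, mul_one,
        mul_zero]
      rw [Finset.sum_ite_eq' Finset.univ γ, if_pos (Finset.mem_univ _)]
    conv_lhs => rw [hXr]
    exact Finset.sum_congr rfl fun γ _ => by rw [hrepr γ]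
  have hX := hexp (Matrix.single k i 1)
  have hentry := congrArg (fun X : Matrix (Fin d) (Fin d) ℂ => X j l) hX
  simp only [Matrix.sum_apply, Matrix.smul_apply, trace_single_mul, smul_eq_mul] at hentry
  rw [Fintype.sum_sum_type, Fintype.sum_prod_type] at hentry
  rw [Finset.sum_comm] at hentry
  simp only [hG, Sum.elim_inl, Sum.elim_inr, Finset.univ_unique, Finset.sum_const,
    Finset.card_singleton, one_smul, Matrix.smul_apply, Matrix.one_apply, smul_eq_mul,
    Matrix.single, Matrix.of_apply] at hentry
  rw [hentry]
  linear_combination -(if i = k then (1:ℂ) else 0) * (if j = l then (1:ℂ) else 0) * hrr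




section
variable (hd : 2 ≤ d) (F : Fin (d - 1) → Fin (d + 1) → Matrix (Fin d) (Fin d) ℂ)
    (htraceless : ∀ n b, (F n b).trace = 0)
    (horth : ∀ n b n' b', ((F n b) * (F n' b')).trace = if n = n' ∧ b = b' then 1 else 0)

include hd htraceless horth

lemma sumFsq :
    ∑ b : Fin (d+1), ∑ m : Fin (d-1), F m b * F m b = ((d:ℂ) - (d:ℂ)⁻¹) • 1 := by
  ext i l
  simp only [Matrix.sum_apply, Matrix.mul_apply]
  rw [Finset.sum_congr rfl (fun b _ => Finset.sum_comm), Finset.sum_comm]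
  rw [Finset.sum_congr rfl (fun k0 _ => comp hd F htraceless horth i k0 k0 l)]
  simp only [Matrix.smul_apply, Matrix.one_apply, smul_eq_mul]
  rw [Finset.sum_sub_distrib]
  by_cases h : i = l
  · subst h
    simp only [and_self, if_true, eq_self_iff_true, true_and, ite_mul, one_mul, zero_mul,
      mul_ite, mul_one, mul_zero]
    rw [Finset.sum_ite_eq' Finset.univ i (fun x => if i = x then ((d:ℂ))⁻¹ else 0)]
    simp
  · simp only [h, and_false, if_false, eq_self_iff_true, true_and, ite_mul, one_mul, zero_mul,
      mul_ite, mul_one, mul_zero, Finset.sum_const_zero, zero_sub, neg_eq_zero]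
    rw [Finset.sum_ite_eq' Finset.univ l (fun x => if i = x then ((d:ℂ))⁻¹ else 0)]
    simp [h]

lemma sumFkron :
    ∑ b : Fin (d+1), ∑ m : Fin (d-1), (F m b) ⊗ₖ (F m b) = Sw d - ((d:ℂ))⁻¹ • 1 := by
  ext p q
  obtain ⟨i, j⟩ := p
  obtain ⟨k, l⟩ := q
  simp only [Matrix.sum_apply, Matrix.kroneckerMap_apply]
  rw [comp hd F htraceless horth i j k l]
  simp only [Matrix.sub_apply, Sw, Matrix.smul_apply, Matrix.one_apply, smul_eq_mul]
  congr 1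
  · exact if_congr ⟨fun ⟨h1, h2⟩ => ⟨h2, h1.symm⟩, fun ⟨h1, h2⟩ => ⟨h2.symm, h1⟩⟩ rfl rfl
  · by_cases hik : i = k <;> by_cases hjl : j = l <;>
      simp [hik, hjl, Prod.ext_iff]

omit hd htraceless horth in
lemma scalar_key (t : ℝ) : ∀ D : ℝ, 0 < D → ∀ r : ℝ, r^2 = D →
    (D+1) * (1/D + t^2*(1+r)^2*(D-1))
      = (D+1) * (1/D) + t^2*(D+r)^2*(D - D⁻¹) := by
  intro D hD r hr
  subst hr
  have hr0 : r ≠ 0 := by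
    intro h
    rw [h] at hD
    simp at hD
  field_simp
  ring

omit hd htraceless horth in
lemma scalar_key2 (t : ℝ) : ∀ D : ℝ, 0 < D → ∀ r : ℝ, r^2 = D →
    1 + (1/D + t^2*(1+r)^2*(D-1)) - ((D+1) * (1/D) + t^2*(D+r)^2 * (-(D⁻¹)))
      = t^2*(D+r)^2 := by
  intro D hD r hr
  subst hr
  have hr0 : r ≠ 0 := by
    intro h
    rw [h] at hD
    simp at hD
  field_simp
  ring

lemma sum_KGP_sq (t κ : ℝ) (hκ : κ = 1/d + t^2*(1+Real.sqrt d)^2*((d:ℝ)-1)) :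
    ∑ b : Fin (d+1), ∑ n : Fin d, KGP F t b n * KGP F t b n
      = ((((d:ℝ)+1) * κ : ℝ) : ℂ) • 1 := by
  have hdR : (0:ℝ) < (d:ℝ) := by exact_mod_cast (by omega : 0 < d)
  have hmul : ∀ b, ∑ n, KGP F t b n * KGP F t b n
      = (((1:ℝ)/d : ℝ) : ℂ) • ((1:Matrix (Fin d) (Fin d) ℂ) * 1)
        + ((t^2 * ((d:ℝ) + Real.sqrt d)^2 : ℝ) : ℂ) • ∑ m, F m b * F m b := by
    intro b
    have h := sum_B_KGP F hd t (LinearMap.mul ℂ (Matrix (Fin d) (Fin d) ℂ)) b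
    simpa only [LinearMap.mul_apply'] using h
  rw [Finset.sum_congr rfl (fun b _ => hmul b)]
  rw [Finset.sum_add_distrib, Finset.sum_const, ← Finset.smul_sum,
    sumFsq hd F htraceless horth, one_mul, Finset.card_univ, Fintype.card_fin,
    ← Nat.cast_smul_eq_nsmul ℂ]
  have hreal : ((d:ℝ)+1) * κ = ((d:ℝ)+1) * (1/d) + t^2*((d:ℝ)+Real.sqrt d)^2*((d:ℝ) - (d:ℝ)⁻¹) := by
    rw [hκ]
    exact scalar_key t (d:ℝ) hdR (Real.sqrt d) (Real.sq_sqrt hdR.le)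
  have hdC : (d:ℂ) ≠ 0 := Nat.cast_ne_zero.mpr (by omega)
  have hsC : ((Real.sqrt d : ℝ) : ℂ)^2 = (d:ℂ) := sqrtd_sq
  have hκ' : ((κ:ℝ):ℂ) = 1/(d:ℂ) + ((t:ℝ):ℂ)^2 * (1+((Real.sqrt d : ℝ):ℂ))^2 * ((d:ℂ) - 1) := by
    have h := congrArg (fun x : ℝ => (x:ℂ)) hκ
    push_cast at h
    exact h
  have hr0 : ((Real.sqrt d : ℝ) : ℂ) ≠ 0 := by
    intro h
    rw [h] at hsC
    simp at hsC
    exact hdC hsC.symm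
  match_scalars
  push_cast
  rw [hκ', ← hsC]
  field_simp
  ring

lemma sum_KGP_kron (t κ : ℝ) (hκ : κ = 1/d + t^2*(1+Real.sqrt d)^2*((d:ℝ)-1)) :
    (((1:ℝ) + κ : ℝ) : ℂ) • (1 : Matrix (Fin d × Fin d) (Fin d × Fin d) ℂ)
        - ∑ b : Fin (d+1), ∑ n : Fin d, (KGP F t b n) ⊗ₖ (KGP F t b n)
      = ((t^2 * ((d:ℝ) + Real.sqrt d)^2 : ℝ) : ℂ) • ((1 : Matrix (Fin d × Fin d) (Fin d × Fin d) ℂ) - Sw d) := by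
  have hdR : (0:ℝ) < (d:ℝ) := by exact_mod_cast (by omega : 0 < d)
  have hkron : ∀ b, ∑ n, (KGP F t b n) ⊗ₖ (KGP F t b n)
      = (((1:ℝ)/d : ℝ) : ℂ) • ((1:Matrix (Fin d) (Fin d) ℂ) ⊗ₖ (1:Matrix (Fin d) (Fin d) ℂ))
        + ((t^2 * ((d:ℝ) + Real.sqrt d)^2 : ℝ) : ℂ) • ∑ m, (F m b) ⊗ₖ (F m b) := by
    intro b
    have hKB : ∀ (A C : Matrix (Fin d) (Fin d) ℂ), (Matrix.kroneckerBilinear (R := ℂ) (α := ℂ) A) C = A ⊗ₖ C := by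
      intro A C
      ext p q
      simp [Matrix.kroneckerBilinear, Matrix.kroneckerMapBilinear_apply_apply,
        Matrix.kroneckerMap_apply]
    have h := sum_B_KGP F hd t (Matrix.kroneckerBilinear (R := ℂ) (α := ℂ)) b
    simpa only [hKB] using h
  rw [Finset.sum_congr rfl (fun b _ => hkron b)]
  rw [Finset.sum_add_distrib, Finset.sum_const, ← Finset.smul_sum,
    sumFkron hd F htraceless horth, Matrix.one_kronecker_one, Finset.card_univ, Fintype.card_fin,
    ← Nat.cast_smul_eq_nsmul ℂ]
  have hreal : (1:ℝ) + κ - (((d:ℝ)+1) * (1/d) + t^2*((d:ℝ)+Real.sqrt d)^2 * (-((d:ℝ)⁻¹)))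
      = t^2*((d:ℝ)+Real.sqrt d)^2 := by
    rw [hκ]
    exact scalar_key2 t (d:ℝ) hdR (Real.sqrt d) (Real.sq_sqrt hdR.le)
  have hdC : (d:ℂ) ≠ 0 := Nat.cast_ne_zero.mpr (by omega)
  have hsC : ((Real.sqrt d : ℝ) : ℂ)^2 = (d:ℂ) := sqrtd_sq
  have hκ' : ((κ:ℝ):ℂ) = 1/(d:ℂ) + ((t:ℝ):ℂ)^2 * (1+((Real.sqrt d : ℝ):ℂ))^2 * ((d:ℂ) - 1) := by
    have h := congrArg (fun x : ℝ => (x:ℂ)) hκ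
    push_cast at h
    exact h
  have hr0 : ((Real.sqrt d : ℝ) : ℂ) ≠ 0 := by
    intro h
    rw [h] at hsC
    simp at hsC
    exact hdC hsC.symm
  match_scalars
  · push_cast
    rw [hκ', ← hsC]
    field_simp
    ring
  · push_cast
    ring

end

lemma sq_sum_lower {d : ℕ} (f : Fin d → ℝ) (a s : ℝ) (hf : ∑ n, f n = 0) :
    a^2 * d ≤ ∑ n : Fin d, (a + s * f n)^2 := by
  have hexp : ∑ n : Fin d, (a + s * f n)^2
      = a^2 * d + 2*a*s*(∑ n, f n) + ∑ n, (s * f n)^2 := by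
    rw [Finset.sum_congr rfl (fun n (_ : n ∈ Finset.univ) =>
      show (a + s*f n)^2 = a^2 + 2*a*s*f n + (s*f n)^2 from by ring)]
    rw [Finset.sum_add_distrib, Finset.sum_add_distrib, Finset.sum_const, ← Finset.mul_sum,
      Finset.card_univ, Fintype.card_fin, nsmul_eq_mul]
    ring
  rw [hexp, hf]
  have h2 : 0 ≤ ∑ n : Fin d, (s * f n)^2 := Finset.sum_nonneg fun n _ => sq_nonneg _
  linarith

lemma psd_smul {n : Type*} [Fintype n] {A : Matrix n n ℂ} (hA : A.PosSemidef) {s : ℝ}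
    (hs : 0 ≤ s) : (((s : ℝ) : ℂ) • A).PosSemidef := by
  refine Matrix.posSemidef_iff_dotProduct_mulVec.mpr ⟨?_, ?_⟩
  · have h := hA.1
    rw [Matrix.IsHermitian, Matrix.conjTranspose_smul, h, Complex.star_def, Complex.conj_ofReal]
  · intro x
    have h := hA.dotProduct_mulVec_nonneg x
    rw [Complex.le_def] at h
    simp only [Complex.zero_re, Complex.zero_im] at h
    rw [Matrix.smul_mulVec, dotProduct_smul, smul_eq_mul, Complex.le_def]
    simp only [Complex.zero_re, Complex.zero_im, Complex.re_ofReal_mul, Complex.im_ofReal_mul]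
    exact ⟨mul_nonneg hs h.1, by rw [← h.2, mul_comm]; simp [← h.2]⟩

end Stmt16

/-- Proposition 3.2: For a density matrix ρ on (ℂ^d)^{⊗M} and
𝐏_n^{(b)} = Σ_i 𝕀⊗…⊗P_n^{(b)}⊗…⊗𝕀 built from a complete Kalev–Gour set of MUMs with
parameter κ, Σ_{b,n} (tr(ρ𝐏_n^{(b)}))² ≥ M²(d+1)/d, and consequently
Σ_{b,n} V(ρ, 𝐏_n^{(b)}) ≤ M²(κ − 1/d) + M(dκ − 1). -/
theorem stmt_16 {M d : ℕ} (hd : 2 ≤ d) (hM : 1 ≤ M)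
    (F : Fin (d - 1) → Fin (d + 1) → Matrix (Fin d) (Fin d) ℂ)
    (hHerm : ∀ n b, (F n b).IsHermitian)
    (htraceless : ∀ n b, (F n b).trace = 0)
    (horth : ∀ n b n' b', ((F n b) * (F n' b')).trace = if n = n' ∧ b = b' then 1 else 0)
    (t κ : ℝ)
    (hκ : κ = 1 / d + t ^ 2 * (1 + Real.sqrt d) ^ 2 * (d - 1))
    (hpsd : ∀ b n, (KGP F t b n).PosSemidef)
    (ρ : Matrix (Fin M → Fin d) (Fin M → Fin d) ℂ)
    (hρ : ρ.PosSemidef) (hρtr : ρ.trace = 1) :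
    ((M : ℝ) ^ 2 * (d + 1) / d
        ≤ ∑ b : Fin (d + 1), ∑ n : Fin d,
            (((ρ * (∑ i : Fin M, localOp i (KGP F t b n))).trace).re) ^ 2) ∧
    (∑ b : Fin (d + 1), ∑ n : Fin d,
        (((ρ * (∑ i : Fin M, localOp i (KGP F t b n))
            * (∑ i : Fin M, localOp i (KGP F t b n))).trace).re
          - (((ρ * (∑ i : Fin M, localOp i (KGP F t b n))).trace).re) ^ 2)
      ≤ (M : ℝ) ^ 2 * (κ - 1 / d) + M * (d * κ - 1)) := by
  classical
  have hdR : (0:ℝ) < (d:ℝ) := by exact_mod_cast (by omega : 0 < d)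
  have hdC : (d:ℂ) ≠ 0 := Nat.cast_ne_zero.mpr (by omega)
  -- PART A
  have key : ∀ (b : Fin (d+1)) (n : Fin d),
      ((ρ * (∑ i : Fin M, localOp i (KGP F t b n))).trace).re
        = (M:ℝ) / d + t * ((ρ * (∑ i : Fin M, localOp i (KGop F b n))).trace).re := by
    intro b n
    have hsplit : (∑ i : Fin M, localOp i (KGP F t b n))
        = (((M:ℝ) / d : ℝ) : ℂ) • 1 + (t:ℂ) • ∑ i : Fin M, localOp i (KGop F b n) := by
      rw [Finset.sum_congr rfl (fun i (_ : i ∈ Finset.univ) => show localOp i (KGP F t b n)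
          = (1/(d:ℂ)) • (1 : Matrix (Fin M → Fin d) (Fin M → Fin d) ℂ)
            + (t:ℂ) • localOp i (KGop F b n) from by
        rw [KGP, Stmt16.localOp_add, Stmt16.localOp_smul, Stmt16.localOp_smul,
          Stmt16.localOp_one])]
      rw [Finset.sum_add_distrib, Finset.sum_const, ← Finset.smul_sum, Finset.card_univ,
        Fintype.card_fin, ← Nat.cast_smul_eq_nsmul ℂ, smul_smul]
      congr 2
      push_cast
      ring
    rw [hsplit, Matrix.mul_add, Matrix.trace_add, Matrix.mul_smul, Matrix.mul_smul,
      Matrix.trace_smul, Matrix.trace_smul, Matrix.mul_one, hρtr, smul_eq_mul, mul_one,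
      smul_eq_mul, Complex.add_re, Complex.ofReal_re, Complex.re_ofReal_mul]
  have hzsum : ∀ b : Fin (d+1), ∑ n : Fin d,
      ((ρ * (∑ i : Fin M, localOp i (KGop F b n))).trace).re = 0 := by
    intro b
    rw [← Complex.re_sum]
    have h1 : ∑ n : Fin d, (ρ * (∑ i : Fin M, localOp i (KGop F b n))).trace
        = (ρ * ∑ n : Fin d, ∑ i : Fin M, localOp i (KGop F b n)).trace := by
      rw [Matrix.mul_sum, Matrix.trace_sum]
    have h2 : ∀ i : Fin M, ∑ n : Fin d, localOp (M := M) i (KGop F b n) = 0 := fun i => by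
      rw [← Stmt16.localOp_sum, Stmt16.sum_KGop F hd b, Stmt16.localOp_zero]
    rw [h1, Finset.sum_comm, Finset.sum_congr rfl (fun i _ => h2 i), Finset.sum_const,
      smul_zero, Matrix.mul_zero, Matrix.trace_zero, Complex.zero_re]
  have partA : (M : ℝ)^2 * ((d:ℝ)+1)/d ≤ ∑ b : Fin (d+1), ∑ n : Fin d,
      (((ρ * (∑ i : Fin M, localOp i (KGP F t b n))).trace).re)^2 := by
    have hbound : ∀ b : Fin (d+1),
        ((M:ℝ)/d)^2 * d ≤ ∑ n : Fin d,
          (((ρ * (∑ i : Fin M, localOp i (KGP F t b n))).trace).re)^2 := by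
      intro b
      rw [Finset.sum_congr rfl (fun n (_ : n ∈ Finset.univ) => by rw [key b n])]
      exact Stmt16.sq_sum_lower
        (fun n => ((ρ * (∑ i : Fin M, localOp i (KGop F b n))).trace).re)
        ((M:ℝ)/d) t (hzsum b)
    calc (M : ℝ)^2 * ((d:ℝ)+1)/d = ∑ _b : Fin (d+1), ((M:ℝ)/d)^2 * d := by
          rw [Finset.sum_const, Finset.card_univ, Fintype.card_fin, nsmul_eq_mul]
          push_cast
          field_simp
      _ ≤ _ := Finset.sum_le_sum fun b _ => hbound b
  refine ⟨partA, ?_⟩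
  -- PART B
  have hdiag : ∀ i : Fin M, ∑ b : Fin (d+1), ∑ n : Fin d,
      (ρ * (localOp i (KGP F t b n) * localOp i (KGP F t b n))).trace
      = ((((d:ℝ)+1) * κ : ℝ) : ℂ) := by
    intro i
    have h1 : ∑ b : Fin (d+1), ∑ n : Fin d,
        (ρ * (localOp i (KGP F t b n) * localOp i (KGP F t b n))).trace
        = (ρ * localOp i (∑ b : Fin (d+1), ∑ n : Fin d, KGP F t b n * KGP F t b n)).trace := by
      simp only [Stmt16.localOp_sum, Matrix.mul_sum, Matrix.trace_sum, Stmt16.localOp_mul]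
    rw [h1, Stmt16.sum_KGP_sq hd F htraceless horth t κ hκ, Stmt16.localOp_smul,
      Stmt16.localOp_one, Matrix.mul_smul, Matrix.mul_one, Matrix.trace_smul, hρtr,
      smul_eq_mul, mul_one]
  have hoff : ∀ i j : Fin M, i ≠ j →
      (∑ b : Fin (d+1), ∑ n : Fin d,
        (ρ * (localOp i (KGP F t b n) * localOp j (KGP F t b n))).trace).re ≤ 1 + κ := by
    intro i j hij
    have hconv : ∑ b : Fin (d+1), ∑ n : Fin d,
        (ρ * (localOp i (KGP F t b n) * localOp j (KGP F t b n))).trace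
        = (ρ * Stmt16.pairOp i j
            (∑ b : Fin (d+1), ∑ n : Fin d, (KGP F t b n) ⊗ₖ (KGP F t b n))).trace := by
      simp only [Stmt16.localOp_mul_localOp hij, Stmt16.pairOp_sum, Matrix.mul_sum,
        Matrix.trace_sum]
    have hpsd2 : ((((1:ℝ)+κ : ℝ):ℂ) • (1 : Matrix (Fin M → Fin d) (Fin M → Fin d) ℂ)
        - Stmt16.pairOp i j
            (∑ b : Fin (d+1), ∑ n : Fin d, (KGP F t b n) ⊗ₖ (KGP F t b n))).PosSemidef := by
      have e1 : (((1:ℝ)+κ : ℝ):ℂ) • (1 : Matrix (Fin M → Fin d) (Fin M → Fin d) ℂ)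
          - Stmt16.pairOp i j (∑ b : Fin (d+1), ∑ n : Fin d, (KGP F t b n) ⊗ₖ (KGP F t b n))
          = Stmt16.pairOp i j ((((1:ℝ)+κ : ℝ):ℂ) • 1
              - ∑ b : Fin (d+1), ∑ n : Fin d, (KGP F t b n) ⊗ₖ (KGP F t b n)) := by
        rw [Stmt16.pairOp_sub, Stmt16.pairOp_smul, Stmt16.pairOp_one hij]
      rw [e1, Stmt16.sum_KGP_kron hd F htraceless horth t κ hκ, Stmt16.pairOp_smul]
      exact Stmt16.psd_smul (Stmt16.pairOp_posSemidef hij Stmt16.one_sub_sw_psd)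
        (by positivity)
    have h0 : 0 ≤ ((ρ * ((((1:ℝ)+κ : ℝ):ℂ) • (1 : Matrix (Fin M → Fin d) (Fin M → Fin d) ℂ)
        - Stmt16.pairOp i j
            (∑ b : Fin (d+1), ∑ n : Fin d, (KGP F t b n) ⊗ₖ (KGP F t b n)))).trace).re :=
      Stmt16.trace_mul_psd_re_nonneg hρ hpsd2
    rw [Matrix.mul_sub, Matrix.trace_sub, Matrix.mul_smul, Matrix.mul_one, Matrix.trace_smul,
      hρtr, smul_eq_mul, mul_one, Complex.sub_re, Complex.ofReal_re] at h0
    rw [hconv]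
    linarith
  have hsum2 : ∀ (b : Fin (d+1)) (n : Fin d),
      (ρ * (∑ i : Fin M, localOp i (KGP F t b n)) * (∑ i : Fin M, localOp i (KGP F t b n))).trace
      = ∑ i : Fin M, ∑ j : Fin M,
          (ρ * (localOp i (KGP F t b n) * localOp j (KGP F t b n))).trace := by
    intro b n
    rw [Matrix.mul_assoc, Finset.sum_mul_sum]
    simp only [Matrix.mul_sum, Matrix.trace_sum]
  have hQbound : ∑ b : Fin (d+1), ∑ n : Fin d,
      ((ρ * (∑ i : Fin M, localOp i (KGP F t b n))
          * (∑ i : Fin M, localOp i (KGP F t b n))).trace).re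
      ≤ (M:ℝ)*(((d:ℝ)+1)*κ) + (M:ℝ)*((M:ℝ)-1)*(1+κ) := by
    have hre : ∀ (b : Fin (d+1)) (n : Fin d),
        ((ρ * (∑ i : Fin M, localOp i (KGP F t b n))
            * (∑ i : Fin M, localOp i (KGP F t b n))).trace).re
        = ∑ i : Fin M, ∑ j : Fin M,
            ((ρ * (localOp i (KGP F t b n) * localOp j (KGP F t b n))).trace).re := by
      intro b n
      rw [hsum2 b n, Complex.re_sum]
      exact Finset.sum_congr rfl fun i _ => Complex.re_sum _ _
    rw [Finset.sum_congr rfl (fun b (_ : b ∈ Finset.univ) =>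
      Finset.sum_congr rfl (fun n (_ : n ∈ Finset.univ) => hre b n))]
    -- swap sums to Σ_i Σ_j Σ_b Σ_n
    rw [Finset.sum_congr rfl (fun b (_ : b ∈ Finset.univ) => Finset.sum_comm), Finset.sum_comm]
    rw [Finset.sum_congr rfl (fun i (_ : i ∈ Finset.univ) => by
      rw [Finset.sum_congr rfl (fun b (_ : b ∈ Finset.univ) => Finset.sum_comm),
        Finset.sum_comm])]
    -- now Σ_i Σ_j Σ_b Σ_n
    have hgd : ∀ i : Fin M, ∑ b : Fin (d+1), ∑ n : Fin d,
        ((ρ * (localOp i (KGP F t b n) * localOp i (KGP F t b n))).trace).re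
        = ((d:ℝ)+1)*κ := by
      intro i
      rw [Finset.sum_congr rfl (fun b (_ : b ∈ Finset.univ) => (Complex.re_sum _ _).symm),
        ← Complex.re_sum, hdiag i, Complex.ofReal_re]
    have hgo : ∀ i j : Fin M, i ≠ j → ∑ b : Fin (d+1), ∑ n : Fin d,
        ((ρ * (localOp i (KGP F t b n) * localOp j (KGP F t b n))).trace).re ≤ 1 + κ := by
      intro i j hij
      have h := hoff i j hij
      rw [Complex.re_sum] at h
      rw [Finset.sum_congr rfl (fun b (_ : b ∈ Finset.univ) => (Complex.re_sum _ _))] at h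
      exact h
    have hrow : ∀ i : Fin M, ∑ j : Fin M, ∑ b : Fin (d+1), ∑ n : Fin d,
        ((ρ * (localOp i (KGP F t b n) * localOp j (KGP F t b n))).trace).re
        ≤ ((d:ℝ)+1)*κ + ((M:ℝ)-1)*(1+κ) := by
      intro i
      rw [← Finset.sum_erase_add Finset.univ _ (Finset.mem_univ i), add_comm]
      have hb1 : ∑ j ∈ Finset.univ.erase i, ∑ b : Fin (d+1), ∑ n : Fin d,
          ((ρ * (localOp i (KGP F t b n) * localOp j (KGP F t b n))).trace).re
          ≤ ((M:ℝ)-1)*(1+κ) := by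
        calc ∑ j ∈ Finset.univ.erase i, ∑ b : Fin (d+1), ∑ n : Fin d,
              ((ρ * (localOp i (KGP F t b n) * localOp j (KGP F t b n))).trace).re
            ≤ ∑ _j ∈ Finset.univ.erase i, (1+κ) :=
              Finset.sum_le_sum fun j hj =>
                hgo i j (Ne.symm (Finset.ne_of_mem_erase hj))
          _ = ((M:ℝ)-1)*(1+κ) := by
              rw [Finset.sum_const, Finset.card_erase_of_mem (Finset.mem_univ i),
                Finset.card_univ, Fintype.card_fin, nsmul_eq_mul]
              congr 1
              push_cast [Nat.cast_sub hM]
              ring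
      rw [hgd i]
      linarith
    calc ∑ i : Fin M, ∑ j : Fin M, ∑ b : Fin (d+1), ∑ n : Fin d,
          ((ρ * (localOp i (KGP F t b n) * localOp j (KGP F t b n))).trace).re
        ≤ ∑ _i : Fin M, (((d:ℝ)+1)*κ + ((M:ℝ)-1)*(1+κ)) :=
          Finset.sum_le_sum fun i _ => hrow i
      _ = (M:ℝ)*(((d:ℝ)+1)*κ) + (M:ℝ)*((M:ℝ)-1)*(1+κ) := by
          rw [Finset.sum_const, Finset.card_univ, Fintype.card_fin, nsmul_eq_mul]
          ring
  -- combine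
  simp only [Finset.sum_sub_distrib]
  have hnum : (M:ℝ)*(((d:ℝ)+1)*κ) + (M:ℝ)*((M:ℝ)-1)*(1+κ) - (M:ℝ)^2*((d:ℝ)+1)/d
      = (M:ℝ)^2*(κ - 1/(d:ℝ)) + (M:ℝ)*((d:ℝ)*κ - 1) := by
    field_simp
    ring
  linarith [partA, hQbound]
end
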